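/- arXiv:1909.04746 — 4 statements merged into one kernel-verified Lean document; each statement's English description precedes it below -/
import Mathlib

section
/- Under the Local SGD dynamics with identical data, if each stochastic gradient g_t^m satisfies E[g_t^m | x_t^1,...,x_t^M] = ∇f(x_t^m) and E[‖g_t^m - ∇f(x_t^m)‖² | x_t^1,...,x_t^M] ≤ σ², the stepsize satisfies 0 < γ ≤ 1/(2L), and consecutive synchronization times satisfy t_{p+1} - t_p ≤ H, then for all t ≥ 1 the expected iterate deviation satisfies E[V_t] ≤ (H-1) γ² σ², where V_t = (1/M) Σ_{m=1}^M ‖x_t^m - x̂_t‖² and x̂_t = (1/M) Σ_{m=1}^M x_t^m. -/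
/-!
Between two synchronizations every node runs plain SGD, and a local step splits as
`x - γ g = (x - γ ∇f x) - γ ξ` with noise `ξ = g - ∇f x`. Smoothness and convexity make `∇f`
`1/L`-cocoercive, so for `γ ≤ 2/L` the gradient step is nonexpansive and does not increase the
spread `∑ₘ ‖xᵐ - x̂‖²` of the nodes. The noise has zero conditional mean given the iterates, so it
is orthogonal in `L²` to the gradient-step part and raises the expected spread by at most
`∑ₘ E‖ξᵐ‖² ≤ M σ²`. The spread vanishes at every synchronization, and at most `H - 1` local steps
separate `t` from the last one.
-/

open MeasureTheory ProbabilityTheory Finset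
open scoped InnerProductSpace

/-- `f : ℝ^d → ℝ` is `L`-smooth and `μ`-strongly convex (`μ = 0` meaning merely convex),
witnessed by the gradient map `df`:
`(μ/2)‖x - y‖² ≤ f x - f y - ⟪df y, x - y⟫ ≤ (L/2)‖x - y‖²` for all `x, y`. -/
def SmoothSC {d : ℕ} (L μ : ℝ) (f : EuclideanSpace ℝ (Fin d) → ℝ)
    (df : EuclideanSpace ℝ (Fin d) → EuclideanSpace ℝ (Fin d)) : Prop :=
  ∀ x y : EuclideanSpace ℝ (Fin d),
    μ / 2 * ‖x - y‖ ^ 2 ≤ f x - f y - ⟪df y, x - y⟫_ℝ ∧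
    f x - f y - ⟪df y, x - y⟫_ℝ ≤ L / 2 * ‖x - y‖ ^ 2

/-- The Bregman divergence `D_f(x, y) = f x - f y - ⟪∇f y, x - y⟫` of `f`,
with gradient map `df`. -/
noncomputable def Breg {d : ℕ} (f : EuclideanSpace ℝ (Fin d) → ℝ)
    (df : EuclideanSpace ℝ (Fin d) → EuclideanSpace ℝ (Fin d))
    (x y : EuclideanSpace ℝ (Fin d)) : ℝ :=
  f x - f y - ⟪df y, x - y⟫_ℝ

section Deviation

variable {ι E : Type*} [Fintype ι] [NormedAddCommGroup E] [InnerProductSpace ℝ E]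

noncomputable def mean (v : ι → E) : E := (Fintype.card ι : ℝ)⁻¹ • ∑ i, v i

noncomputable def sqDev (v : ι → E) : ℝ := ∑ i, ‖v i - mean v‖ ^ 2

lemma continuous_sqDev : Continuous (sqDev : (ι → E) → ℝ) := by
  unfold sqDev mean
  fun_prop

lemma sqDev_nonneg (v : ι → E) : 0 ≤ sqDev v :=
  sum_nonneg fun _ _ => sq_nonneg _

lemma norm_sub_mean_sq_le_sqDev (v : ι → E) (i : ι) : ‖v i - mean v‖ ^ 2 ≤ sqDev v :=
  single_le_sum (f := fun i => ‖v i - mean v‖ ^ 2) (fun _ _ => sq_nonneg _) (mem_univ i)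

lemma sum_sub_mean (v : ι → E) : ∑ i, (v i - mean v) = 0 := by
  rcases isEmpty_or_nonempty ι with hι | hι
  · simp
  have hcard : (Fintype.card ι : ℝ) ≠ 0 := Nat.cast_ne_zero.mpr Fintype.card_ne_zero
  rw [sum_sub_distrib, sum_const, card_univ, mean, ← Nat.cast_smul_eq_nsmul ℝ, smul_smul,
    mul_inv_cancel₀ hcard, one_smul, sub_self]

lemma mean_sub_smul (u w : ι → E) (γ : ℝ) :
    mean (fun i => u i - γ • w i) = mean u - γ • mean w := by
  simp only [mean, sum_sub_distrib, ← smul_sum, smul_sub, smul_comm γ]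

lemma sqDev_sub_smul (u w : ι → E) (γ : ℝ) :
    sqDev (fun i => u i - γ • w i)
      = sqDev u - 2 * γ * ∑ i, ⟪u i - mean u, w i⟫_ℝ + γ ^ 2 * sqDev w := by
  have hsplit : ∀ i, u i - γ • w i - mean (fun i => u i - γ • w i)
      = (u i - mean u) - γ • (w i - mean w) := fun i => by
    rw [mean_sub_smul, smul_sub]; abel
  have hcross : ∑ i, ⟪u i - mean u, w i - mean w⟫_ℝ = ∑ i, ⟪u i - mean u, w i⟫_ℝ := by
    simp only [inner_sub_right, sum_sub_distrib (f := fun i => ⟪u i - mean u, w i⟫_ℝ),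
      ← sum_inner, sum_sub_mean, inner_zero_left, sub_zero]
  simp only [sqDev, hsplit, norm_sub_sq_real, inner_smul_right, norm_smul, mul_pow,
    Real.norm_eq_abs, sq_abs, sum_add_distrib, sum_sub_distrib, ← mul_sum, hcross]
  ring

lemma sqDev_le_sum_norm_sub_sq (v : ι → E) (c : E) : sqDev v ≤ ∑ i, ‖v i - c‖ ^ 2 := by
  have hexpand : ∀ i, ‖v i - c‖ ^ 2
      = ‖v i - mean v‖ ^ 2 + 2 * ⟪v i - mean v, mean v - c⟫_ℝ + ‖mean v - c‖ ^ 2 := fun i => by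
    rw [← norm_add_sq_real, sub_add_sub_cancel]
  simp only [hexpand, sum_add_distrib, ← mul_sum, ← sum_inner, sum_sub_mean, inner_zero_left,
    mul_zero, add_zero, sqDev]
  exact le_add_of_nonneg_right (sum_nonneg fun _ _ => sq_nonneg _)

lemma sqDev_eq_zero_of_forall_eq {v : ι → E} (h : ∀ i j, v i = v j) : sqDev v = 0 := by
  rcases isEmpty_or_nonempty ι with hι | ⟨⟨i₀⟩⟩
  · simp [sqDev]
  refine le_antisymm ?_ (sqDev_nonneg v)
  simpa [h _ i₀] using sqDev_le_sum_norm_sub_sq v (v i₀)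

end Deviation

section Smooth

lemma breg_three_point {d : ℕ} (f : EuclideanSpace ℝ (Fin d) → ℝ)
    (df : EuclideanSpace ℝ (Fin d) → EuclideanSpace ℝ (Fin d)) (z a b : EuclideanSpace ℝ (Fin d)) :
    Breg f df z b = Breg f df z a + Breg f df a b + ⟪df a - df b, z - a⟫_ℝ := by
  simp only [Breg, inner_sub_left, inner_sub_right]
  ring

lemma breg_add_breg_swap {d : ℕ} (f : EuclideanSpace ℝ (Fin d) → ℝ)
    (df : EuclideanSpace ℝ (Fin d) → EuclideanSpace ℝ (Fin d)) (a b : EuclideanSpace ℝ (Fin d)) :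
    Breg f df a b + Breg f df b a = ⟪df a - df b, a - b⟫_ℝ := by
  have h := breg_three_point f df b a b
  rw [show Breg f df b b = 0 by simp [Breg], ← neg_sub a b, inner_neg_right] at h
  linarith

variable {d : ℕ} {L μ : ℝ} {f : EuclideanSpace ℝ (Fin d) → ℝ}
  {df : EuclideanSpace ℝ (Fin d) → EuclideanSpace ℝ (Fin d)}

namespace SmoothSC

lemma breg_nonneg (hμ : 0 ≤ μ) (hf : SmoothSC L μ f df) (a b : EuclideanSpace ℝ (Fin d)) :
    0 ≤ Breg f df a b :=
  le_trans (by positivity) (hf a b).1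

/-- With `u = df a - df b` and `z = a - L⁻¹ u`, the three-point identity gives
`D(a, b) = D(z, b) - D(z, a) + ‖u‖² / L`, where `0 ≤ D(z, b)` and `D(z, a) ≤ ‖u‖² / (2L)`. -/
lemma norm_sub_sq_div_le_breg (hL : 0 < L) (hμ : 0 ≤ μ) (hf : SmoothSC L μ f df)
    (a b : EuclideanSpace ℝ (Fin d)) :
    ‖df a - df b‖ ^ 2 / (2 * L) ≤ Breg f df a b := by
  set u := df a - df b
  set z := a - L⁻¹ • u
  have hza : z - a = -(L⁻¹ • u) := by simp [z]
  have hthree := breg_three_point f df z a b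
  rw [hza, inner_neg_right, real_inner_smul_right, real_inner_self_eq_norm_sq] at hthree
  have hsmooth : Breg f df z a ≤ L / 2 * ‖z - a‖ ^ 2 := (hf z a).2
  rw [hza, norm_neg, norm_smul, Real.norm_eq_abs, abs_inv, abs_of_pos hL] at hsmooth
  have hconv := hf.breg_nonneg hμ z b
  have hLsq : L / 2 * (L⁻¹ * ‖u‖) ^ 2 = ‖u‖ ^ 2 / (2 * L) := by field_simp
  have hhalf : L⁻¹ * ‖u‖ ^ 2 = ‖u‖ ^ 2 / (2 * L) + ‖u‖ ^ 2 / (2 * L) := by field_simp; ring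
  linarith

lemma norm_sub_sq_div_le_inner (hL : 0 < L) (hμ : 0 ≤ μ) (hf : SmoothSC L μ f df)
    (a b : EuclideanSpace ℝ (Fin d)) :
    ‖df a - df b‖ ^ 2 / L ≤ ⟪df a - df b, a - b⟫_ℝ := by
  have hab := hf.norm_sub_sq_div_le_breg hL hμ a b
  have hba := hf.norm_sub_sq_div_le_breg hL hμ b a
  rw [norm_sub_rev] at hba
  have hhalf : ‖df a - df b‖ ^ 2 / L
      = ‖df a - df b‖ ^ 2 / (2 * L) + ‖df a - df b‖ ^ 2 / (2 * L) := by
    field_simp; ring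
  linarith [breg_add_breg_swap f df a b]

lemma lipschitzWith (hL : 0 < L) (hμ : 0 ≤ μ) (hf : SmoothSC L μ f df) :
    LipschitzWith (Real.toNNReal L) df := by
  refine LipschitzWith.of_dist_le_mul fun a b => ?_
  rw [dist_eq_norm, dist_eq_norm, Real.coe_toNNReal L hL.le]
  have h := (hf.norm_sub_sq_div_le_inner hL hμ a b).trans (real_inner_le_norm _ _)
  rw [div_le_iff₀ hL, sq] at h
  rcases (norm_nonneg (df a - df b)).eq_or_lt with h0 | h0
  · rw [← h0]; positivity
  · nlinarith

lemma norm_gradient_step_sub_sq_le {γ : ℝ} (hL : 0 < L) (hμ : 0 ≤ μ) (hf : SmoothSC L μ f df)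
    (hγ0 : 0 ≤ γ) (hγ : γ ≤ 2 / L) (a b : EuclideanSpace ℝ (Fin d)) :
    ‖(a - γ • df a) - (b - γ • df b)‖ ^ 2 ≤ ‖a - b‖ ^ 2 := by
  have hco := hf.norm_sub_sq_div_le_inner hL hμ a b
  rw [show (a - γ • df a) - (b - γ • df b) = (a - b) - γ • (df a - df b) by module,
    norm_sub_sq_real, real_inner_smul_right, norm_smul, Real.norm_eq_abs, abs_of_nonneg hγ0,
    real_inner_comm, mul_pow]
  have hstep : γ ^ 2 * ‖df a - df b‖ ^ 2 ≤ 2 * γ * (‖df a - df b‖ ^ 2 / L) := calc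
    γ ^ 2 * ‖df a - df b‖ ^ 2 = γ * (γ * ‖df a - df b‖ ^ 2) := by ring
    _ ≤ γ * (2 / L * ‖df a - df b‖ ^ 2) := by gcongr
    _ = 2 * γ * (‖df a - df b‖ ^ 2 / L) := by ring
  linarith [mul_le_mul_of_nonneg_left hco (by positivity : (0 : ℝ) ≤ 2 * γ)]

end SmoothSC

end Smooth

section Noise

variable {Ω ι E : Type*} [Fintype ι] {m m0 : MeasurableSpace Ω} {P : Measure Ω}
  [NormedAddCommGroup E] [InnerProductSpace ℝ E]

lemma integral_inner_eq_zero_of_condExp_eq_zero [CompleteSpace E] (hm : m ≤ m0)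
    [SigmaFinite (P.trim hm)] {b ξ : Ω → E} (hb : StronglyMeasurable[m] b)
    (hbξ : Integrable (fun ω => ⟪b ω, ξ ω⟫_ℝ) P)
    (hξ : Integrable ξ P) (hξ0 : P[ξ|m] =ᵐ[P] 0) :
    ∫ ω, ⟪b ω, ξ ω⟫_ℝ ∂P = 0 := by
  have hpull : P[fun ω => ⟪b ω, ξ ω⟫_ℝ | m] =ᵐ[P] fun ω => ⟪b ω, P[ξ|m] ω⟫_ℝ :=
    condExp_bilin_of_stronglyMeasurable_left (innerSL ℝ) hb hbξ hξ
  rw [← integral_condExp hm, integral_congr_ae (hpull.trans ?_), integral_zero]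
  filter_upwards [hξ0] with ω hω
  simp [hω]

lemma stronglyMeasurable_mean {v : ι → Ω → E} (hv : ∀ i, StronglyMeasurable[m] (v i)) :
    StronglyMeasurable[m] (fun ω => mean (fun i => v i ω)) := by
  unfold mean
  fun_prop

lemma memLp_mean {p : ENNReal} {v : ι → Ω → E} (hv : ∀ i, MemLp (v i) p P) :
    MemLp (fun ω => mean (fun i => v i ω)) p P :=
  (memLp_finsetSum univ fun i _ => hv i).const_smul _

lemma integrable_sqDev {v : ι → Ω → E} (hv : ∀ i, MemLp (v i) 2 P) :
    Integrable (fun ω => sqDev (fun i => v i ω)) P := by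
  refine integrable_finsetSum univ fun i _ => ?_
  have h := (hv i).sub (memLp_mean hv)
  exact (memLp_two_iff_integrable_sq_norm h.1).1 h

/-- The cross term of `sqDev_sub_smul` vanishes in expectation, since the centred points are
`m`-measurable and the noise has zero conditional mean. -/
lemma integral_sqDev_sub_smul [CompleteSpace E] [IsFiniteMeasure P] (hm : m ≤ m0)
    {u ξ : ι → Ω → E} (hu : ∀ i, StronglyMeasurable[m] (u i))
    (hu2 : Integrable (fun ω => sqDev (fun i => u i ω)) P)
    (hξ : ∀ i, MemLp (ξ i) 2 P) (hξ0 : ∀ i, P[ξ i|m] =ᵐ[P] 0) (γ : ℝ) :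
    Integrable (fun ω => sqDev (fun i => u i ω - γ • ξ i ω)) P ∧
    ∫ ω, sqDev (fun i => u i ω - γ • ξ i ω) ∂P
      = ∫ ω, sqDev (fun i => u i ω) ∂P + γ ^ 2 * ∫ ω, sqDev (fun i => ξ i ω) ∂P := by
  set c : ι → Ω → E := fun i ω => u i ω - mean (fun j => u j ω)
  have hc : ∀ i, StronglyMeasurable[m] (c i) := fun i => (hu i).sub (stronglyMeasurable_mean hu)
  have hc2 : ∀ i, MemLp (c i) 2 P := fun i => by
    refine (memLp_two_iff_integrable_sq_norm ((hc i).mono hm).aestronglyMeasurable).2 ?_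
    refine hu2.mono' (((hc i).mono hm).norm.pow 2).aestronglyMeasurable ?_
    filter_upwards with ω
    rw [Real.norm_of_nonneg (sq_nonneg _)]
    exact norm_sub_mean_sq_le_sqDev (fun j => u j ω) i
  have hcross_int : ∀ i, Integrable (fun ω => ⟪c i ω, ξ i ω⟫_ℝ) P := fun i =>
    memLp_one_iff_integrable.1 ((innerSL ℝ).memLp_of_bilin 1 (hc2 i) (hξ i))
  have hcross : ∀ i, ∫ ω, ⟪c i ω, ξ i ω⟫_ℝ ∂P = 0 := fun i =>
    integral_inner_eq_zero_of_condExp_eq_zero hm (hc i) (hcross_int i)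
      ((hξ i).integrable one_le_two) (hξ0 i)
  have hsum_int : Integrable (fun ω => ∑ i, ⟪c i ω, ξ i ω⟫_ℝ) P :=
    integrable_finsetSum univ fun i _ => hcross_int i
  have hξ2 := integrable_sqDev hξ
  have hpt : (fun ω => sqDev (fun i => u i ω - γ • ξ i ω)) = fun ω =>
      sqDev (fun i => u i ω) - 2 * γ * ∑ i, ⟪c i ω, ξ i ω⟫_ℝ + γ ^ 2 * sqDev (fun i => ξ i ω) :=
    funext fun ω => sqDev_sub_smul _ _ γ
  have hdiff_int : Integrable (fun ω =>
      sqDev (fun i => u i ω) - 2 * γ * ∑ i, ⟪c i ω, ξ i ω⟫_ℝ) P :=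
    hu2.sub (hsum_int.const_mul _)
  rw [hpt]
  refine ⟨hdiff_int.add (hξ2.const_mul _), ?_⟩
  rw [integral_add hdiff_int (hξ2.const_mul _),
    integral_sub hu2 (hsum_int.const_mul _), integral_const_mul, integral_const_mul,
    integral_finsetSum univ fun i _ => hcross_int i]
  simp [hcross]

lemma integral_sqDev_le_sum_integral_norm_sq {ξ : ι → Ω → E} (hξ : ∀ i, MemLp (ξ i) 2 P) :
    ∫ ω, sqDev (fun i => ξ i ω) ∂P ≤ ∑ i, ∫ ω, ‖ξ i ω‖ ^ 2 ∂P := by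
  have hξ2 : ∀ i, Integrable (fun ω => ‖ξ i ω‖ ^ 2) P := fun i =>
    (memLp_two_iff_integrable_sq_norm (hξ i).1).1 (hξ i)
  rw [← integral_finsetSum _ fun i _ => hξ2 i]
  exact integral_mono (integrable_sqDev hξ) (integrable_finsetSum _ fun i _ => hξ2 i) fun ω => by
    simpa using sqDev_le_sum_norm_sub_sq (fun i => ξ i ω) 0

lemma condExp_sub_ae_eq_zero [CompleteSpace E] (hm : m ≤ m0) [SigmaFinite (P.trim hm)]
    {G h : Ω → E} (hh : StronglyMeasurable[m] h) (hGint : Integrable G P)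
    (hhint : Integrable h P) (hGh : P[G|m] =ᵐ[P] h) :
    P[G - h|m] =ᵐ[P] 0 := by
  filter_upwards [condExp_sub hGint hhint m, hGh] with ω hsub hG
  rw [hsub, Pi.sub_apply, hG, condExp_of_stronglyMeasurable hm hh hhint, sub_self, Pi.zero_apply]

lemma integral_le_of_ae_condExp_le [IsProbabilityMeasure P] (hm : m ≤ m0) {g : Ω → ℝ} {c : ℝ}
    (h : ∀ᵐ ω ∂P, P[g|m] ω ≤ c) :
    ∫ ω, g ω ∂P ≤ c := by
  rw [← integral_condExp hm]
  calc ∫ ω, P[g|m] ω ∂P ≤ ∫ _, c ∂P := integral_mono_ae integrable_condExp (integrable_const c) h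
    _ = c := by simp

end Noise

section GradientStep

variable {d : ℕ} {L μ γ σ : ℝ} {f : EuclideanSpace ℝ (Fin d) → ℝ}
  {df : EuclideanSpace ℝ (Fin d) → EuclideanSpace ℝ (Fin d)}

lemma SmoothSC.sqDev_gradient_step_le {ι : Type*} [Fintype ι] (hL : 0 < L) (hμ : 0 ≤ μ)
    (hf : SmoothSC L μ f df) (hγ0 : 0 ≤ γ) (hγ : γ ≤ 2 / L) (v : ι → EuclideanSpace ℝ (Fin d)) :
    sqDev (fun i => v i - γ • df (v i)) ≤ sqDev v :=
  (sqDev_le_sum_norm_sub_sq _ (mean v - γ • df (mean v))).trans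
    (sum_le_sum fun i _ => hf.norm_gradient_step_sub_sq_le hL hμ hγ0 hγ (v i) (mean v))

lemma SmoothSC.integral_sqDev_sgd_step_le {ι Ω : Type*} [Fintype ι] {m m0 : MeasurableSpace Ω}
    {P : Measure Ω} [IsProbabilityMeasure P] (hL : 0 < L) (hμ : 0 ≤ μ) (hf : SmoothSC L μ f df)
    (hγ0 : 0 ≤ γ) (hγ : γ ≤ 2 / L) (hm : m ≤ m0) {X G : ι → Ω → EuclideanSpace ℝ (Fin d)}
    (hX : ∀ i, Measurable[m] (X i)) (hG : ∀ i, Measurable (G i))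
    (hGint : ∀ i, Integrable (G i) P)
    (hvint : ∀ i, Integrable (fun ω => ‖G i ω - df (X i ω)‖ ^ 2) P)
    (hunbiased : ∀ i, P[G i|m] =ᵐ[P] fun ω => df (X i ω))
    (hvar : ∀ i, ∀ᵐ ω ∂P, P[fun ω' => ‖G i ω' - df (X i ω')‖ ^ 2|m] ω ≤ σ ^ 2)
    (hint : Integrable (fun ω => sqDev fun i => X i ω) P) :
    Integrable (fun ω => sqDev fun i => X i ω - γ • G i ω) P ∧
    ∫ ω, sqDev (fun i => X i ω - γ • G i ω) ∂P
      ≤ ∫ ω, sqDev (fun i => X i ω) ∂P + Fintype.card ι * (γ ^ 2 * σ ^ 2) := by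
  have hdfX : ∀ i, StronglyMeasurable[m] fun ω => df (X i ω) := fun i =>
    (hf.lipschitzWith hL hμ).continuous.comp_stronglyMeasurable (hX i).stronglyMeasurable
  set ξ : ι → Ω → EuclideanSpace ℝ (Fin d) := fun i ω => G i ω - df (X i ω)
  set u : ι → Ω → EuclideanSpace ℝ (Fin d) := fun i ω => X i ω - γ • df (X i ω)
  have hξ : ∀ i, MemLp (ξ i) 2 P := fun i =>
    (memLp_two_iff_integrable_sq_norm
      ((hG i).sub ((hdfX i).mono hm).measurable).aestronglyMeasurable).2 (hvint i)
  have hξ0 : ∀ i, P[ξ i|m] =ᵐ[P] 0 := fun i =>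
    condExp_sub_ae_eq_zero hm (hdfX i) (hGint i)
      (((hGint i).sub ((hξ i).integrable one_le_two)).congr (.of_forall fun ω => by simp [ξ]))
      (hunbiased i)
  have hu : ∀ i, StronglyMeasurable[m] (u i) := fun i =>
    (hX i).stronglyMeasurable.sub ((hdfX i).const_smul γ)
  have hu_le : ∀ ω, sqDev (fun i => u i ω) ≤ sqDev (fun i => X i ω) := fun ω =>
    hf.sqDev_gradient_step_le hL hμ hγ0 hγ _
  have hu2 : Integrable (fun ω => sqDev fun i => u i ω) P :=
    hint.mono' (continuous_sqDev.measurable.comp (measurable_pi_iff.2 fun i =>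
      ((hu i).mono hm).measurable)).aestronglyMeasurable (.of_forall fun ω => by
        rw [Real.norm_of_nonneg (sqDev_nonneg _)]; exact hu_le ω)
  have hnoise : ∫ ω, sqDev (fun i => ξ i ω) ∂P ≤ Fintype.card ι * σ ^ 2 := calc
    _ ≤ ∑ i, ∫ ω, ‖ξ i ω‖ ^ 2 ∂P := integral_sqDev_le_sum_integral_norm_sq hξ
    _ ≤ ∑ _i : ι, σ ^ 2 := sum_le_sum fun i _ => integral_le_of_ae_condExp_le hm (hvar i)
    _ = Fintype.card ι * σ ^ 2 := by simp
  have hsplit : ∀ ω, (fun i => X i ω - γ • G i ω) = fun i => u i ω - γ • ξ i ω := fun ω => by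
    funext i; simp only [u, ξ, smul_sub]; abel
  obtain ⟨hint', heq⟩ := integral_sqDev_sub_smul hm hu hu2 hξ hξ0 γ
  simp only [hsplit]
  refine ⟨hint', heq.trans_le (add_le_add (integral_mono hu2 hint hu_le) ?_)⟩
  calc γ ^ 2 * ∫ ω, sqDev (fun i => ξ i ω) ∂P ≤ γ ^ 2 * (Fintype.card ι * σ ^ 2) := by gcongr
    _ = Fintype.card ι * (γ ^ 2 * σ ^ 2) := by ring

end GradientStep

section Windows

lemma exists_apply_le_and_lt_apply_succ {s : ℕ → ℕ} (hs0 : s 0 = 0) (hs : StrictMono s) (t : ℕ) :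
    ∃ p, s p ≤ t ∧ t < s (p + 1) := by
  induction t with
  | zero => exact ⟨0, hs0.le, by simpa [hs0] using hs Nat.zero_lt_one⟩
  | succ t ih =>
    obtain ⟨p, hpt, htp⟩ := ih
    rcases (show t + 1 ≤ s (p + 1) from htp).lt_or_eq with h | h
    · exact ⟨p, by omega, h⟩
    · exact ⟨p + 1, h.ge, by rw [h]; exact hs (Nat.lt_succ_self _)⟩

lemma not_exists_apply_eq_of_lt_of_lt {s : ℕ → ℕ} (hs : StrictMono s) {p u : ℕ}
    (h₁ : s p < u) (h₂ : u < s (p + 1)) : ¬∃ q, s q = u := by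
  rintro ⟨q, rfl⟩
  have := hs.lt_iff_lt.1 h₁
  have := hs.lt_iff_lt.1 h₂
  omega

lemma integrable_and_integral_le_of_increments {Ω : Type*} {m0 : MeasurableSpace Ω}
    {P : Measure Ω} {D : ℕ → Ω → ℝ} {c : ℝ} {t₀ : ℕ} (h0 : D t₀ = 0) (n : ℕ)
    (hstep : ∀ k < n, Integrable (D (t₀ + k)) P →
      Integrable (D (t₀ + k + 1)) P ∧ ∫ ω, D (t₀ + k + 1) ω ∂P ≤ ∫ ω, D (t₀ + k) ω ∂P + c) :
    Integrable (D (t₀ + n)) P ∧ ∫ ω, D (t₀ + n) ω ∂P ≤ n * c := by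
  induction n with
  | zero => simp [h0]
  | succ n ih =>
    obtain ⟨hint, hle⟩ := ih fun k hk => hstep k (by omega)
    obtain ⟨hint', hle'⟩ := hstep n (by omega) hint
    refine ⟨hint', ?_⟩
    rw [← add_assoc]
    push_cast
    linarith

lemma sqDev_eq_zero_at_sync {ι Ω E : Type*} [Fintype ι] [NormedAddCommGroup E]
    [InnerProductSpace ℝ E] {x : ℕ → ι → Ω → E} {x₀ : E} {y : ℕ → Ω → E} {s : ℕ → ℕ}
    (hx₀ : ∀ i ω, x 0 i ω = x₀) (hsync : ∀ t i ω, (∃ p, s p = t + 1) → x (t + 1) i ω = y t ω)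
    (p : ℕ) : (fun ω => sqDev fun i => x (s p) i ω) = 0 :=
  funext fun ω => sqDev_eq_zero_of_forall_eq fun i j => by
    rcases h : s p with _ | t
    · rw [hx₀, hx₀]
    · rw [hsync t i ω ⟨p, h⟩, hsync t j ω ⟨p, h⟩]

end Windows

theorem iterate_variance_bound_general {d M H : ℕ} (hM : 0 < M)
    {Ω : Type*} [MeasurableSpace Ω]
    (P : Measure Ω) [IsProbabilityMeasure P]
    (L γ σ : ℝ) (hL : 0 < L) (μ : ℝ) (hμ : 0 ≤ μ)
    (hγ0 : 0 < γ) (hγ : γ ≤ 1 / (2 * L))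
    (f : EuclideanSpace ℝ (Fin d) → ℝ) (df : EuclideanSpace ℝ (Fin d) → EuclideanSpace ℝ (Fin d)) (hf : SmoothSC L μ f df)
    -- local iterates and stochastic gradients of Local SGD
    (x g : ℕ → Fin M → Ω → EuclideanSpace ℝ (Fin d)) (x0 : EuclideanSpace ℝ (Fin d))
    (hx0 : ∀ m ω, x 0 m ω = x0)
    (hgmeas : ∀ t m, Measurable (g t m))
    -- synchronization times `s 0 = 0 < s 1 < s 2 < ⋯` with gaps at most `H`
    (s : ℕ → ℕ) (hs0 : s 0 = 0) (hsmono : StrictMono s)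
    (hgap : ∀ p, s (p + 1) ≤ s p + H)
    -- Local SGD dynamics
    (hsync : ∀ t m ω, (∃ p, s p = t + 1) →
      x (t + 1) m ω = (M : ℝ)⁻¹ • ∑ j, (x t j ω - γ • g t j ω))
    (hlocal : ∀ t m ω, ¬(∃ p, s p = t + 1) →
      x (t + 1) m ω = x t m ω - γ • g t m ω)
    -- the σ-algebra generated by the iterates at time `t`
    (𝔾 : ℕ → MeasurableSpace Ω)
    (h𝔾 : ∀ t, 𝔾 t = MeasurableSpace.comap (fun ω => fun m => x t m ω) inferInstance)
    (h𝔾le : ∀ t, 𝔾 t ≤ ‹MeasurableSpace Ω›)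
    -- the stochastic gradients are conditionally unbiased with variance at most σ²
    (hgint : ∀ t m, Integrable (g t m) P)
    (hvint : ∀ t m, Integrable (fun ω => ‖g t m ω - df (x t m ω)‖ ^ 2) P)
    (hunbiased : ∀ t m, P[g t m | 𝔾 t] =ᵐ[P] fun ω => df (x t m ω))
    (hvar : ∀ t m, ∀ᵐ ω ∂P,
      (P[fun ω' => ‖g t m ω' - df (x t m ω')‖ ^ 2 | 𝔾 t]) ω ≤ σ ^ 2) :
    ∀ t : ℕ, 1 ≤ t →
      (∫ ω, (M : ℝ)⁻¹ * ∑ m, ‖x t m ω - (M : ℝ)⁻¹ • ∑ j, x t j ω‖ ^ 2 ∂P) ≤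
        ((H : ℝ) - 1) * γ ^ 2 * σ ^ 2 := by
  intro t _
  have hx𝔾 : ∀ u m, Measurable[𝔾 u] (x u m) := fun u m => by
    rw [h𝔾 u]; exact (measurable_pi_apply m).comp (comap_measurable fun ω (m : Fin M) => x u m ω)
  set D : ℕ → Ω → ℝ := fun u ω => sqDev fun m => x u m ω
  have hstep : ∀ u, (¬∃ q, s q = u + 1) → Integrable (D u) P →
      Integrable (D (u + 1)) P ∧ ∫ ω, D (u + 1) ω ∂P ≤ ∫ ω, D u ω ∂P + M * (γ ^ 2 * σ ^ 2) := by
    intro u hu hint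
    simp only [D, hlocal u _ _ hu]
    simpa using hf.integral_sqDev_sgd_step_le hL hμ hγ0.le
      (hγ.trans (by rw [div_le_div_iff₀ (by positivity) hL]; linarith)) (h𝔾le u) (hx𝔾 u)
      (hgmeas u) (hgint u) (hvint u) (hunbiased u) (hvar u) hint
  obtain ⟨p, hpt, htp⟩ := exists_apply_le_and_lt_apply_succ hs0 hsmono t
  obtain ⟨-, hbound⟩ := integrable_and_integral_le_of_increments
    (sqDev_eq_zero_at_sync hx0 hsync p) (t - s p) fun k hk =>
      hstep (s p + k) (not_exists_apply_eq_of_lt_of_lt (p := p) hsmono (by omega) (by omega))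
  rw [Nat.add_sub_cancel' hpt] at hbound
  have hwindow : ((t - s p : ℕ) : ℝ) ≤ H - 1 := by
    rw [le_sub_iff_add_le]
    exact_mod_cast (by have := hgap p; omega : t - s p + 1 ≤ H)
  calc ∫ ω, (M : ℝ)⁻¹ * ∑ m, ‖x t m ω - (M : ℝ)⁻¹ • ∑ j, x t j ω‖ ^ 2 ∂P
      = (M : ℝ)⁻¹ * ∫ ω, D t ω ∂P := by simp [D, sqDev, mean, integral_const_mul]
    _ ≤ (M : ℝ)⁻¹ * ((t - s p : ℕ) * (M * (γ ^ 2 * σ ^ 2))) := by gcongr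
    _ = (t - s p : ℕ) * (γ ^ 2 * σ ^ 2) := by field_simp
    _ ≤ ((H : ℝ) - 1) * γ ^ 2 * σ ^ 2 := by rw [mul_assoc]; gcongr

/-- bound on the expected iterate deviation `E[V_t] ≤ (H-1)γ²σ²`. -/
theorem iterate_variance_bound {d M H : ℕ} (hM : 0 < M) (hH : 1 ≤ H)
    {Ω : Type*} [MeasurableSpace Ω] [StandardBorelSpace Ω]
    (P : Measure Ω) [IsProbabilityMeasure P]
    (L γ σ : ℝ) (hL : 0 < L) (μ : ℝ) (hμ : 0 ≤ μ)
    (hσ : 0 ≤ σ)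
    (hγ0 : 0 < γ) (hγ : γ ≤ 1 / (2 * L))
    (f : EuclideanSpace ℝ (Fin d) → ℝ) (df : EuclideanSpace ℝ (Fin d) → EuclideanSpace ℝ (Fin d)) (hf : SmoothSC L μ f df)
    (xstar : EuclideanSpace ℝ (Fin d)) (hmin : ∀ y, f xstar ≤ f y)
    -- local iterates and stochastic gradients of Local SGD
    (x g : ℕ → Fin M → Ω → EuclideanSpace ℝ (Fin d)) (x0 : EuclideanSpace ℝ (Fin d))
    (hx0 : ∀ m ω, x 0 m ω = x0)
    (hxmeas : ∀ t m, Measurable (x t m)) (hgmeas : ∀ t m, Measurable (g t m))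
    -- synchronization times `s 0 = 0 < s 1 < s 2 < ⋯` with gaps at most `H`
    (s : ℕ → ℕ) (hs0 : s 0 = 0) (hsmono : StrictMono s)
    (hgap : ∀ p, s (p + 1) ≤ s p + H)
    -- Local SGD dynamics
    (hsync : ∀ t m ω, (∃ p, s p = t + 1) →
      x (t + 1) m ω = (M : ℝ)⁻¹ • ∑ j, (x t j ω - γ • g t j ω))
    (hlocal : ∀ t m ω, ¬(∃ p, s p = t + 1) →
      x (t + 1) m ω = x t m ω - γ • g t m ω)
    -- the σ-algebra generated by the iterates at time `t`
    (𝔾 : ℕ → MeasurableSpace Ω)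
    (h𝔾 : ∀ t, 𝔾 t = MeasurableSpace.comap (fun ω => fun m => x t m ω) inferInstance)
    (h𝔾le : ∀ t, 𝔾 t ≤ ‹MeasurableSpace Ω›)
    -- the stochastic gradients are conditionally unbiased with variance at most σ²
    (hgint : ∀ t m, Integrable (g t m) P)
    (hvint : ∀ t m, Integrable (fun ω => ‖g t m ω - df (x t m ω)‖ ^ 2) P)
    (hunbiased : ∀ t m, P[g t m | 𝔾 t] =ᵐ[P] fun ω => df (x t m ω))
    (hvar : ∀ t m, ∀ᵐ ω ∂P,
      (P[fun ω' => ‖g t m ω' - df (x t m ω')‖ ^ 2 | 𝔾 t]) ω ≤ σ ^ 2)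
    -- the stochastic gradients are independent across nodes given the current iterates
    (hci : ∀ t, iCondIndepFun (𝔾 t) (h𝔾le t) (g t) P) :
    ∀ t : ℕ, 1 ≤ t →
      (∫ ω, (M : ℝ)⁻¹ * ∑ m, ‖x t m ω - (M : ℝ)⁻¹ • ∑ j, x t j ω‖ ^ 2 ∂P) ≤
        ((H : ℝ) - 1) * γ ^ 2 * σ ^ 2 :=
  iterate_variance_bound_general hM P L γ σ hL μ hμ hγ0 hγ f df hf x g x0 hx0 hgmeas s hs0 hsmono
    hgap hsync hlocal 𝔾 h𝔾 h𝔾le hgint hvint hunbiased hvar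
end

section
/- Let f : ℝ^d → ℝ be written as f(x) = E_{z∼D_m}[f(x,z)] for each m, with f(·,z) almost surely L-smooth and convex, and let x_* be a minimizer of f. Let x^1, ..., x^M ∈ ℝ^d be arbitrary points and let z_1, ..., z_M be independent with z_m ∼ D_m. Then E‖(1/M) Σ_{m=1}^M (∇f(x^m, z_m) - ∇f(x^m))‖² ≤ 2σ_opt²/M + (4L/M²) Σ_{m=1}^M D_f(x^m, x_*), where σ_opt² = (1/M) Σ_m E_{z_m∼D_m}‖∇f(x_*, z_m)‖² and D_f(x,y) = f(x) - f(y) - ⟨∇f(y), x - y⟩. -/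
open MeasureTheory ProbabilityTheory Finset
open scoped InnerProductSpace

/-!
The noise terms `∇f(xᵐ, zₘ) - ∇f(xᵐ)` are independent and centred, so the second moment of
their average is `1/M²` times the sum of their variances. Each variance is at most the second
moment `E‖∇f(xᵐ, z)‖² ≤ 2 E‖∇f(xᵐ, z) - ∇f(x_*, z)‖² + 2 E‖∇f(x_*, z)‖²`, and the first term is
at most `2L D_f(xᵐ, x_*)` by integrating the co-coercivity
`‖∇g x - ∇g y‖² ≤ 2L D_g(x, y)` of the smooth convex samples `g = f(·, z)`.
-/

section Bregman

variable {d : ℕ}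

theorem breg_three_point_s10 (g : EuclideanSpace ℝ (Fin d) → ℝ)
    (dg : EuclideanSpace ℝ (Fin d) → EuclideanSpace ℝ (Fin d))
    (w x y : EuclideanSpace ℝ (Fin d)) :
    Breg g dg w y = Breg g dg w x + Breg g dg x y + ⟪dg x - dg y, w - x⟫_ℝ := by
  have hsplit : w - y = (w - x) + (x - y) := by abel
  simp only [Breg, hsplit, inner_add_right, inner_sub_left]
  ring

theorem SmoothSC.norm_sub_sq_le_two_mul_breg {L μ : ℝ} (hL : 0 < L) (hμ : 0 ≤ μ)
    {g : EuclideanSpace ℝ (Fin d) → ℝ} {dg : EuclideanSpace ℝ (Fin d) → EuclideanSpace ℝ (Fin d)}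
    (h : SmoothSC L μ g dg) (x y : EuclideanSpace ℝ (Fin d)) :
    ‖dg x - dg y‖ ^ 2 ≤ 2 * L * Breg g dg x y := by
  -- Compare `g` at `x` and `y` with its value at the gradient step `w` from `x`.
  set u := dg x - dg y
  set w := x - L⁻¹ • u
  have hwx : w - x = -(L⁻¹ • u) := by simp [w]
  have hlow : 0 ≤ Breg g dg w y := le_trans (by positivity) (h w y).1
  have hup : Breg g dg w x ≤ ‖u‖ ^ 2 / (2 * L) :=
    calc Breg g dg w x ≤ L / 2 * ‖w - x‖ ^ 2 := (h w x).2
      _ = ‖u‖ ^ 2 / (2 * L) := by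
        rw [hwx, norm_neg, norm_smul, mul_pow, Real.norm_eq_abs, sq_abs]
        field_simp
  have hinner : ⟪u, w - x⟫_ℝ = -(‖u‖ ^ 2 / L) := by
    rw [hwx, inner_neg_right, real_inner_smul_right, real_inner_self_eq_norm_sq, inv_mul_eq_div]
  have hthree := breg_three_point_s10 g dg w x y
  rw [hinner] at hthree
  have hhalf : ‖u‖ ^ 2 / L = 2 * (‖u‖ ^ 2 / (2 * L)) := by field_simp
  have hdiv : ‖u‖ ^ 2 / (2 * L) ≤ Breg g dg x y := by linarith
  rw [div_le_iff₀ (by positivity)] at hdiv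
  linarith

end Bregman

theorem norm_add_sq_le_two_mul {E : Type*} [SeminormedAddGroup E] (a b : E) :
    ‖a + b‖ ^ 2 ≤ 2 * (‖a‖ ^ 2 + ‖b‖ ^ 2) :=
  (pow_le_pow_left₀ (norm_nonneg _) (norm_add_le a b) 2).trans add_sq_le

section Moments

variable {α E : Type*} [MeasurableSpace α] {μ : Measure α}
  [NormedAddCommGroup E] [InnerProductSpace ℝ E] [CompleteSpace E]

theorem integral_norm_sub_integral_sq [IsProbabilityMeasure μ] {g : α → E} (hg : MemLp g 2 μ) :
    ∫ a, ‖g a - μ[g]‖ ^ 2 ∂μ = ∫ a, ‖g a‖ ^ 2 ∂μ - ‖μ[g]‖ ^ 2 := by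
  have hint : Integrable g μ := hg.integrable one_le_two
  have hsq : Integrable (fun a => ‖g a‖ ^ 2) μ := hg.integrable_norm_pow two_ne_zero
  have hcross : Integrable (fun a => 2 * ⟪g a, μ[g]⟫_ℝ) μ := (hint.inner_const _).const_mul 2
  have hsub : Integrable (fun a => ‖g a‖ ^ 2 - 2 * ⟪g a, μ[g]⟫_ℝ) μ := hsq.sub hcross
  simp_rw [norm_sub_sq_real]
  rw [integral_add hsub (integrable_const _), integral_sub hsq hcross,
    integral_const_mul, integral_const, probReal_univ, one_smul]
  simp only [real_inner_comm μ[g]]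
  rw [integral_inner hint, real_inner_self_eq_norm_sq]
  ring

theorem integral_norm_sum_sq_of_iIndepFun [MeasurableSpace E] [BorelSpace E] {ι : Type*}
    [Fintype ι] {Y : ι → α → E} (hindep : iIndepFun Y μ) (hY : ∀ i, MemLp (Y i) 2 μ)
    (hmean : ∀ i, μ[Y i] = 0) :
    ∫ a, ‖∑ i, Y i a‖ ^ 2 ∂μ = ∑ i, ∫ a, ‖Y i a‖ ^ 2 ∂μ := by
  have := hindep.isProbabilityMeasure
  have hint (i : ι) : Integrable (Y i) μ := (hY i).integrable one_le_two
  have hcross (i j : ι) (hij : i ≠ j) : Integrable (fun a => ⟪Y i a, Y j a⟫_ℝ) μ ∧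
      ∫ a, ⟪Y i a, Y j a⟫_ℝ ∂μ = 0 := by
    have hindep_ij := hindep.indepFun hij
    refine ⟨hindep_ij.integrable_bilin (hint i) (hint j) (innerSL ℝ), ?_⟩
    exact (hindep_ij.integral_bilin (hint i) (hint j) (innerSL ℝ)).trans (by simp [hmean])
  have hinner (i j : ι) : Integrable (fun a => ⟪Y i a, Y j a⟫_ℝ) μ := by
    rcases eq_or_ne i j with rfl | hij
    · simpa only [real_inner_self_eq_norm_sq] using (hY i).integrable_norm_pow two_ne_zero
    · exact (hcross i j hij).1
  calc ∫ a, ‖∑ i, Y i a‖ ^ 2 ∂μ = ∫ a, ∑ i, ∑ j, ⟪Y i a, Y j a⟫_ℝ ∂μ := by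
        simp_rw [← real_inner_self_eq_norm_sq, sum_inner, inner_sum]
    _ = ∑ i, ∑ j, ∫ a, ⟪Y i a, Y j a⟫_ℝ ∂μ := by
        rw [integral_finsetSum _ fun i _ => integrable_finsetSum _ fun j _ => hinner i j]
        exact sum_congr rfl fun i _ => integral_finsetSum _ fun j _ => hinner i j
    _ = ∑ i, ∫ a, ⟪Y i a, Y i a⟫_ℝ ∂μ :=
        sum_congr rfl fun i _ =>
          sum_eq_single i (fun j _ hji => (hcross i j hji.symm).2) (by simp)
    _ = ∑ i, ∫ a, ‖Y i a‖ ^ 2 ∂μ := by simp_rw [real_inner_self_eq_norm_sq]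

theorem integral_norm_sum_comp_sq_of_iIndepFun [MeasurableSpace E] [BorelSpace E]
    {Z ι : Type*} [MeasurableSpace Z] [Fintype ι] {z : ι → α → Z} {ν : ι → Measure Z}
    (hz : ∀ i, Measurable (z i)) (hindep : iIndepFun z μ) (hlaw : ∀ i, μ.map (z i) = ν i)
    {G : ι → Z → E} (hG : ∀ i, Measurable (G i)) (hG2 : ∀ i, MemLp (G i) 2 (ν i))
    (hmean : ∀ i, ∫ w, G i w ∂(ν i) = 0) :
    ∫ a, ‖∑ i, G i (z i a)‖ ^ 2 ∂μ = ∑ i, ∫ w, ‖G i w‖ ^ 2 ∂(ν i) := by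
  obtain rfl : ν = fun i => μ.map (z i) := funext fun i => (hlaw i).symm
  refine (integral_norm_sum_sq_of_iIndepFun (hindep.comp G hG)
    (fun i => (hG2 i).comp_of_map (hz i).aemeasurable) fun i => ?_).trans ?_
  · exact (integral_map (hz i).aemeasurable (hG2 i).1).symm.trans (hmean i)
  · exact sum_congr rfl fun i _ =>
      (integral_map (hz i).aemeasurable ((hG2 i).1.norm.pow 2)).symm

end Moments

section StochasticGradient

variable {d : ℕ} {Z : Type*} [MeasurableSpace Z] {ν : Measure Z}
  {F : EuclideanSpace ℝ (Fin d) → Z → ℝ}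
  {dF : EuclideanSpace ℝ (Fin d) → Z → EuclideanSpace ℝ (Fin d)}
  {f : EuclideanSpace ℝ (Fin d) → ℝ} {df : EuclideanSpace ℝ (Fin d) → EuclideanSpace ℝ (Fin d)}

theorem integrable_breg (hF : ∀ x, Integrable (F x) ν) (hdF : ∀ x, Integrable (dF x) ν)
    (x y : EuclideanSpace ℝ (Fin d)) :
    Integrable (fun w => Breg (fun x => F x w) (fun x => dF x w) x y) ν :=
  ((hF x).sub (hF y)).sub ((hdF y).inner_const _)

theorem breg_eq_integral (hf : ∀ x, f x = ∫ w, F x w ∂ν) (hdf : ∀ x, df x = ∫ w, dF x w ∂ν)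
    (hF : ∀ x, Integrable (F x) ν) (hdF : ∀ x, Integrable (dF x) ν)
    (x y : EuclideanSpace ℝ (Fin d)) :
    Breg f df x y = ∫ w, Breg (fun x => F x w) (fun x => dF x w) x y ∂ν := by
  have hdiff : Integrable (fun w => F x w - F y w) ν := (hF x).sub (hF y)
  have hinner : Integrable (fun w => ⟪x - y, dF y w⟫_ℝ) ν := (hdF y).const_inner _
  simp only [Breg, real_inner_comm (x - y)]
  rw [integral_sub hdiff hinner, integral_sub (hF x) (hF y), integral_inner (hdF y), hf, hf, hdf]

theorem integral_norm_sub_sq_le_two_mul_breg {L : ℝ} (hL : 0 < L)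
    (hsmooth : ∀ᵐ w ∂ν, SmoothSC L 0 (fun x => F x w) (fun x => dF x w))
    (hf : ∀ x, f x = ∫ w, F x w ∂ν) (hdf : ∀ x, df x = ∫ w, dF x w ∂ν)
    (hF : ∀ x, Integrable (F x) ν) (hdF : ∀ x, Integrable (dF x) ν)
    (x y : EuclideanSpace ℝ (Fin d)) :
    ∫ w, ‖dF x w - dF y w‖ ^ 2 ∂ν ≤ 2 * L * Breg f df x y := by
  rw [breg_eq_integral hf hdf hF hdF, ← integral_const_mul]
  exact integral_mono_of_nonneg (.of_forall fun w => by positivity)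
    ((integrable_breg hF hdF x y).const_mul _)
    (hsmooth.mono fun w hw => hw.norm_sub_sq_le_two_mul_breg hL le_rfl x y)

theorem integral_norm_sub_sq_le_four_mul_breg_add [IsProbabilityMeasure ν] {L : ℝ} (hL : 0 < L)
    (hsmooth : ∀ᵐ w ∂ν, SmoothSC L 0 (fun x => F x w) (fun x => dF x w))
    (hf : ∀ x, f x = ∫ w, F x w ∂ν) (hdf : ∀ x, df x = ∫ w, dF x w ∂ν)
    (hF : ∀ x, Integrable (F x) ν) (hdF2 : ∀ x, MemLp (dF x) 2 ν)
    (x y : EuclideanSpace ℝ (Fin d)) :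
    ∫ w, ‖dF x w - df x‖ ^ 2 ∂ν ≤ 4 * L * Breg f df x y + 2 * ∫ w, ‖dF y w‖ ^ 2 ∂ν := by
  have hsq (v : EuclideanSpace ℝ (Fin d)) : Integrable (fun w => ‖dF v w‖ ^ 2) ν :=
    (hdF2 v).integrable_norm_pow two_ne_zero
  have hsq_sub : Integrable (fun w => ‖dF x w - dF y w‖ ^ 2) ν :=
    ((hdF2 x).sub (hdF2 y)).integrable_norm_pow two_ne_zero
  have hcentre : ∫ w, ‖dF x w - df x‖ ^ 2 ∂ν ≤ ∫ w, ‖dF x w‖ ^ 2 ∂ν := by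
    rw [hdf x, integral_norm_sub_integral_sq (hdF2 x)]
    exact sub_le_self _ (by positivity)
  have hsplit : ∫ w, ‖dF x w‖ ^ 2 ∂ν ≤
      2 * ∫ w, ‖dF x w - dF y w‖ ^ 2 ∂ν + 2 * ∫ w, ‖dF y w‖ ^ 2 ∂ν := by
    rw [← mul_add, ← integral_add hsq_sub (hsq y), ← integral_const_mul]
    refine integral_mono (hsq x) ((hsq_sub.add (hsq y)).const_mul 2) fun w => ?_
    simpa using norm_add_sq_le_two_mul (dF x w - dF y w) (dF y w)
  have hcoco := integral_norm_sub_sq_le_two_mul_breg hL hsmooth hf hdf hF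
    (fun v => (hdF2 v).integrable one_le_two) x y
  linarith

end StochasticGradient

theorem minibatch_variance_reduction_general {d M : ℕ} (L : ℝ) (hL : 0 < L) {Z : Type*} [MeasurableSpace Z] {Ω : Type*} [MeasurableSpace Ω]
    (P : Measure Ω)
    (D : Fin M → Measure Z) (hD : ∀ m, IsProbabilityMeasure (D m))
    (F : EuclideanSpace ℝ (Fin d) → Z → ℝ) (dF : EuclideanSpace ℝ (Fin d) → Z → EuclideanSpace ℝ (Fin d))
    (f : EuclideanSpace ℝ (Fin d) → ℝ) (df : EuclideanSpace ℝ (Fin d) → EuclideanSpace ℝ (Fin d))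
    (hsmooth : ∀ m, ∀ᵐ z ∂(D m), SmoothSC L 0 (fun x => F x z) (fun x => dF x z))
    (hf : ∀ m x, f x = ∫ z, F x z ∂(D m))
    (hdf : ∀ m x, df x = ∫ z, dF x z ∂(D m))
    (hdFjm : Measurable (fun p : EuclideanSpace ℝ (Fin d) × Z => dF p.1 p.2))
    (hFint : ∀ m x, Integrable (fun z => F x z) (D m))
    (hdFsq : ∀ m x, Integrable (fun z => ‖dF x z‖ ^ 2) (D m))
    (xstar : EuclideanSpace ℝ (Fin d))
    (z : Fin M → Ω → Z) (hz : ∀ m, Measurable (z m))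
    (hindep : iIndepFun z P)
    (hlaw : ∀ m, P.map (z m) = D m)
    (sopt2 : ℝ)
    (hsopt2 : sopt2 = (M : ℝ)⁻¹ * ∑ m, ∫ w, ‖dF xstar w‖ ^ 2 ∂(D m))
    (x : Fin M → EuclideanSpace ℝ (Fin d)) :
    (∫ ω, ‖(M : ℝ)⁻¹ • ∑ m, (dF (x m) (z m ω) - df (x m))‖ ^ 2 ∂P) ≤
      2 * sopt2 / M + (4 * L / (M : ℝ) ^ 2) * ∑ m, Breg f df (x m) xstar := by
  have := hD
  have hdF_meas (v : EuclideanSpace ℝ (Fin d)) : Measurable (dF v) :=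
    hdFjm.comp measurable_prodMk_left
  have hdF2 (m : Fin M) (v : EuclideanSpace ℝ (Fin d)) : MemLp (dF v) 2 (D m) :=
    (memLp_two_iff_integrable_sq_norm (hdF_meas v).aestronglyMeasurable).2 (hdFsq m v)
  have hsum : ∫ ω, ‖∑ m, (dF (x m) (z m ω) - df (x m))‖ ^ 2 ∂P =
      ∑ m, ∫ w, ‖dF (x m) w - df (x m)‖ ^ 2 ∂(D m) :=
    integral_norm_sum_comp_sq_of_iIndepFun hz hindep hlaw
      (fun m => (hdF_meas (x m)).sub_const _) (fun m => (hdF2 m (x m)).sub (memLp_const _))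
      fun m => by rw [integral_sub ((hdF2 m _).integrable one_le_two) (integrable_const _),
        integral_const, ← hdf m]; simp
  calc ∫ ω, ‖(M : ℝ)⁻¹ • ∑ m, (dF (x m) (z m ω) - df (x m))‖ ^ 2 ∂P
      = (M : ℝ)⁻¹ ^ 2 * ∑ m, ∫ w, ‖dF (x m) w - df (x m)‖ ^ 2 ∂(D m) := by
        simp_rw [norm_smul, mul_pow, norm_inv, Real.norm_natCast]
        rw [integral_const_mul, hsum]
    _ ≤ (M : ℝ)⁻¹ ^ 2 * ∑ m, (4 * L * Breg f df (x m) xstar + 2 * ∫ w, ‖dF xstar w‖ ^ 2 ∂(D m)) := by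
        gcongr with m
        exact integral_norm_sub_sq_le_four_mul_breg_add hL (hsmooth m) (hf m) (hdf m) (hFint m)
          (hdF2 m) (x m) xstar
    _ = 2 * sopt2 / M + (4 * L / (M : ℝ) ^ 2) * ∑ m, Breg f df (x m) xstar := by
        rw [hsopt2, sum_add_distrib, ← mul_sum, ← mul_sum]
        ring

/-- variance reduction for the averaged stochastic gradient. -/
theorem minibatch_variance_reduction {d M : ℕ} (hM : 0 < M) (L : ℝ) (hL : 0 < L) {Z : Type*} [MeasurableSpace Z] {Ω : Type*} [MeasurableSpace Ω]
    (P : Measure Ω) [IsProbabilityMeasure P]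
    (D : Fin M → Measure Z) (hD : ∀ m, IsProbabilityMeasure (D m))
    (F : EuclideanSpace ℝ (Fin d) → Z → ℝ) (dF : EuclideanSpace ℝ (Fin d) → Z → EuclideanSpace ℝ (Fin d))
    (f : EuclideanSpace ℝ (Fin d) → ℝ) (df : EuclideanSpace ℝ (Fin d) → EuclideanSpace ℝ (Fin d))
    (hsmooth : ∀ m, ∀ᵐ z ∂(D m), SmoothSC L 0 (fun x => F x z) (fun x => dF x z))
    (hf : ∀ m x, f x = ∫ z, F x z ∂(D m))
    (hdf : ∀ m x, df x = ∫ z, dF x z ∂(D m))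
    (hFjm : Measurable (fun p : EuclideanSpace ℝ (Fin d) × Z => F p.1 p.2))
    (hdFjm : Measurable (fun p : EuclideanSpace ℝ (Fin d) × Z => dF p.1 p.2))
    (hFint : ∀ m x, Integrable (fun z => F x z) (D m))
    (hdFsq : ∀ m x, Integrable (fun z => ‖dF x z‖ ^ 2) (D m))
    (xstar : EuclideanSpace ℝ (Fin d)) (hmin : ∀ y, f xstar ≤ f y)
    (z : Fin M → Ω → Z) (hz : ∀ m, Measurable (z m))
    (hindep : iIndepFun z P)
    (hlaw : ∀ m, P.map (z m) = D m)
    (sopt2 : ℝ)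
    (hsopt2 : sopt2 = (M : ℝ)⁻¹ * ∑ m, ∫ w, ‖dF xstar w‖ ^ 2 ∂(D m))
    (x : Fin M → EuclideanSpace ℝ (Fin d)) :
    (∫ ω, ‖(M : ℝ)⁻¹ • ∑ m, (dF (x m) (z m ω) - df (x m))‖ ^ 2 ∂P) ≤
      2 * sopt2 / M + (4 * L / (M : ℝ) ^ 2) * ∑ m, Breg f df (x m) xstar :=
  minibatch_variance_reduction_general L hL P D hD F dF f df hsmooth hf hdf hdFjm hFint hdFsq xstar
    z hz hindep hlaw sopt2 hsopt2 x
end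

section
/- Let f : ℝ^d → ℝ be written as f(x) = E_{z∼D_m}[f(x,z)] for each m, with f(·,z) almost surely L-smooth and convex, and let x_* be a minimizer of f. Let x^1, ..., x^M ∈ ℝ^d, let g^m = ∇f(x^m, z_m) with z_1, ..., z_M independent, z_m ∼ D_m, and let g = (1/M) Σ_m g^m. Then (1/M) Σ_{m=1}^M E‖g^m - g‖² ≤ 2σ_opt² + (4L/M) Σ_{m=1}^M D_f(x^m, x_*), where σ_opt² = (1/M) Σ_m E_{z_m∼D_m}‖∇f(x_*, z_m)‖² and D_f(x,y) = f(x) - f(y) - ⟨∇f(y), x - y⟩. -/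
open MeasureTheory ProbabilityTheory Finset
open scoped InnerProductSpace

/-!
The average `c` of vectors `a₁, …, a_M` minimises `c ↦ ∑ ‖aₘ - c‖²`; comparing with `c = 0` bounds the
left-hand side by `(1/M) ∑ E‖gᵐ‖²`. Writing `∇f(xᵐ, z) = (∇f(xᵐ, z) - ∇f(x_*, z)) + ∇f(x_*, z)`, the
second piece contributes `2σ_opt²`, and co-coercivity of gradients of `L`-smooth convex functions,
`‖∇h x - ∇h y‖² ≤ 2L D_h(x, y)`, bounds the first by `4L D_{f(·,z)}(xᵐ, x_*)`, whose expectation is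
`4L D_f(xᵐ, x_*)`.
-/

theorem SmoothSC.inner_le_sub {d : ℕ} {L μ : ℝ} {f : EuclideanSpace ℝ (Fin d) → ℝ}
    {df : EuclideanSpace ℝ (Fin d) → EuclideanSpace ℝ (Fin d)} (h : SmoothSC L μ f df)
    (hμ : 0 ≤ μ) (x y : EuclideanSpace ℝ (Fin d)) : ⟪df y, x - y⟫_ℝ ≤ f x - f y := by
  have := (h x y).1
  have : 0 ≤ μ / 2 * ‖x - y‖ ^ 2 := by positivity
  linarith

section InnerProductSpace

variable {E : Type*} [NormedAddCommGroup E] [InnerProductSpace ℝ E]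

theorem sum_norm_sub_average_sq_le {ι : Type*} (s : Finset ι) (a : ι → E) :
    ∑ i ∈ s, ‖a i - (#s : ℝ)⁻¹ • ∑ j ∈ s, a j‖ ^ 2 ≤ ∑ i ∈ s, ‖a i‖ ^ 2 := by
  rcases s.eq_empty_or_nonempty with rfl | hs
  · simp
  set c := (#s : ℝ)⁻¹ • ∑ j ∈ s, a j
  have hsum : ∑ j ∈ s, a j = (#s : ℝ) • c := by
    rw [smul_inv_smul₀ (by positivity)]
  clear_value c
  have key : ∑ i ∈ s, ‖a i - c‖ ^ 2 = ∑ i ∈ s, ‖a i‖ ^ 2 - #s * ‖c‖ ^ 2 := by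
    simp only [norm_sub_sq_real, sum_add_distrib, sum_sub_distrib, ← sum_inner, hsum, ← mul_sum,
      real_inner_smul_left, real_inner_self_eq_norm_sq, sum_const, nsmul_eq_mul]
    ring
  have : 0 ≤ #s * ‖c‖ ^ 2 := by positivity
  linarith

theorem norm_sq_le_two_mul_norm_sub_sq_add (a b : E) :
    ‖a‖ ^ 2 ≤ 2 * ‖a - b‖ ^ 2 + 2 * ‖b‖ ^ 2 := by
  have := parallelogram_law_with_norm ℝ (a - b) b
  rw [sub_add_cancel] at this
  nlinarith [sq_nonneg ‖a - b - b‖]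

theorem norm_grad_sub_sq_le_of_convex_of_smooth {L : ℝ} (hL : 0 < L) {h : E → ℝ} {dh : E → E}
    (hconv : ∀ x y, ⟪dh y, x - y⟫_ℝ ≤ h x - h y)
    (hsmooth : ∀ x y, h x - h y - ⟪dh y, x - y⟫_ℝ ≤ L / 2 * ‖x - y‖ ^ 2) (x y : E) :
    ‖dh x - dh y‖ ^ 2 ≤ 2 * L * (h x - h y - ⟪dh y, x - y⟫_ℝ) := by
  set v := dh x - dh y
  -- the lower bound at `y` and the upper bound at `x`, both evaluated at the gradient step `x - v / L`
  set w := x - L⁻¹ • v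
  have lower := hconv w y
  have upper := hsmooth w x
  have hwy : w - y = (x - y) - L⁻¹ • v := by simp only [w]; abel
  have hwx : w - x = -(L⁻¹ • v) := by simp only [w]; abel
  have hv_sq : ⟪dh x, v⟫_ℝ - ⟪dh y, v⟫_ℝ = ‖v‖ ^ 2 := by
    rw [← inner_sub_left, real_inner_self_eq_norm_sq]
  rw [hwy, inner_sub_right, real_inner_smul_right] at lower
  rw [hwx, inner_neg_right, real_inner_smul_right, norm_neg, norm_smul, mul_pow,
    Real.norm_of_nonneg (inv_nonneg.2 hL.le)] at upper
  field_simp at lower upper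
  linarith

theorem norm_grad_sq_le_of_convex_of_smooth {L : ℝ} (hL : 0 < L) {h : E → ℝ} {dh : E → E}
    (hconv : ∀ x y, ⟪dh y, x - y⟫_ℝ ≤ h x - h y)
    (hsmooth : ∀ x y, h x - h y - ⟪dh y, x - y⟫_ℝ ≤ L / 2 * ‖x - y‖ ^ 2) (x y : E) :
    ‖dh x‖ ^ 2 ≤ 2 * ‖dh y‖ ^ 2 + 4 * L * (h x - h y - ⟪dh y, x - y⟫_ℝ) := by
  have := norm_grad_sub_sq_le_of_convex_of_smooth hL hconv hsmooth x y
  linarith [norm_sq_le_two_mul_norm_sub_sq_add (dh x) (dh y)]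

end InnerProductSpace

section Integral

variable {E Ω : Type*} [NormedAddCommGroup E] [InnerProductSpace ℝ E] [MeasurableSpace Ω]
  {P : Measure Ω}

theorem sum_integral_norm_sub_average_sq_le {ι : Type*} (s : Finset ι) {G : ι → Ω → E}
    (hG : ∀ i ∈ s, MemLp (G i) 2 P) :
    ∑ i ∈ s, ∫ ω, ‖G i ω - (#s : ℝ)⁻¹ • ∑ j ∈ s, G j ω‖ ^ 2 ∂P ≤
      ∑ i ∈ s, ∫ ω, ‖G i ω‖ ^ 2 ∂P := by
  have sq_integrable {g : Ω → E} (hg : MemLp g 2 P) : Integrable (fun ω => ‖g ω‖ ^ 2) P :=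
    (memLp_two_iff_integrable_sq_norm hg.aestronglyMeasurable).1 hg
  have hdev : ∀ i ∈ s, MemLp (fun ω => G i ω - (#s : ℝ)⁻¹ • ∑ j ∈ s, G j ω) 2 P := fun i hi =>
    (hG i hi).sub ((memLp_finsetSum s hG).const_smul _)
  rw [← integral_finsetSum _ fun i hi => sq_integrable (hdev i hi),
    ← integral_finsetSum _ fun i hi => sq_integrable (hG i hi)]
  refine integral_mono (integrable_finsetSum _ fun i hi => sq_integrable (hdev i hi))
    (integrable_finsetSum _ fun i hi => sq_integrable (hG i hi)) fun ω => ?_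
  exact sum_norm_sub_average_sq_le s (G · ω)

variable [CompleteSpace E]

theorem integral_norm_grad_sq_le_of_convex_of_smooth [IsFiniteMeasure P] {L : ℝ} (hL : 0 < L)
    {F : E → Ω → ℝ} {dF : E → Ω → E}
    (hconv : ∀ᵐ ω ∂P, ∀ x y, ⟪dF y ω, x - y⟫_ℝ ≤ F x ω - F y ω)
    (hsmooth : ∀ᵐ ω ∂P, ∀ x y, F x ω - F y ω - ⟪dF y ω, x - y⟫_ℝ ≤ L / 2 * ‖x - y‖ ^ 2)
    {x y : E} (hFx : Integrable (F x) P) (hFy : Integrable (F y) P) (hdFy : MemLp (dF y) 2 P) :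
    ∫ ω, ‖dF x ω‖ ^ 2 ∂P ≤ 2 * ∫ ω, ‖dF y ω‖ ^ 2 ∂P +
      4 * L * (∫ ω, F x ω ∂P - ∫ ω, F y ω ∂P - ⟪∫ ω, dF y ω ∂P, x - y⟫_ℝ) := by
  have hdFy_sq : Integrable (fun ω => ‖dF y ω‖ ^ 2) P :=
    (memLp_two_iff_integrable_sq_norm hdFy.aestronglyMeasurable).1 hdFy
  have hinner : Integrable (fun ω => ⟪dF y ω, x - y⟫_ℝ) P :=
    (hdFy.integrable one_le_two).inner_const _
  have hdiff : Integrable (fun ω => F x ω - F y ω) P := hFx.sub hFy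
  have hbregman : Integrable (fun ω => F x ω - F y ω - ⟪dF y ω, x - y⟫_ℝ) P := hdiff.sub hinner
  have integral_bregman : ∫ ω, (F x ω - F y ω - ⟪dF y ω, x - y⟫_ℝ) ∂P =
      ∫ ω, F x ω ∂P - ∫ ω, F y ω ∂P - ⟪∫ ω, dF y ω ∂P, x - y⟫_ℝ := by
    rw [integral_sub hdiff hinner, integral_sub hFx hFy, real_inner_comm,
      ← integral_inner (hdFy.integrable one_le_two)]
    simp only [real_inner_comm]
  calc ∫ ω, ‖dF x ω‖ ^ 2 ∂P
      ≤ ∫ ω, (2 * ‖dF y ω‖ ^ 2 + 4 * L * (F x ω - F y ω - ⟪dF y ω, x - y⟫_ℝ)) ∂P := by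
        refine integral_mono_of_nonneg (.of_forall fun ω => by positivity)
          ((hdFy_sq.const_mul 2).add (hbregman.const_mul _)) ?_
        filter_upwards [hconv, hsmooth] with ω hconvω hsmoothω
        exact norm_grad_sq_le_of_convex_of_smooth hL hconvω hsmoothω x y
    _ = 2 * ∫ ω, ‖dF y ω‖ ^ 2 ∂P +
        4 * L * (∫ ω, F x ω ∂P - ∫ ω, F y ω ∂P - ⟪∫ ω, dF y ω ∂P, x - y⟫_ℝ) := by
      rw [integral_add (hdFy_sq.const_mul 2) (hbregman.const_mul _), integral_const_mul,
        integral_const_mul, integral_bregman]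

end Integral

theorem average_gradient_deviation_general {d M : ℕ} (L : ℝ) (hL : 0 < L) {Z : Type*} [MeasurableSpace Z] {Ω : Type*} [MeasurableSpace Ω]
    (P : Measure Ω)
    (D : Fin M → Measure Z) (hD : ∀ m, IsProbabilityMeasure (D m))
    (F : EuclideanSpace ℝ (Fin d) → Z → ℝ) (dF : EuclideanSpace ℝ (Fin d) → Z → EuclideanSpace ℝ (Fin d))
    (f : EuclideanSpace ℝ (Fin d) → ℝ) (df : EuclideanSpace ℝ (Fin d) → EuclideanSpace ℝ (Fin d))
    (hsmooth : ∀ m, ∀ᵐ z ∂(D m), SmoothSC L 0 (fun x => F x z) (fun x => dF x z))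
    (hf : ∀ m x, f x = ∫ z, F x z ∂(D m))
    (hdf : ∀ m x, df x = ∫ z, dF x z ∂(D m))
    (hdFjm : Measurable (fun p : EuclideanSpace ℝ (Fin d) × Z => dF p.1 p.2))
    (hFint : ∀ m x, Integrable (fun z => F x z) (D m))
    (hdFsq : ∀ m x, Integrable (fun z => ‖dF x z‖ ^ 2) (D m))
    (xstar : EuclideanSpace ℝ (Fin d))
    (z : Fin M → Ω → Z) (hz : ∀ m, Measurable (z m))
    (hlaw : ∀ m, P.map (z m) = D m)
    (sopt2 : ℝ)
    (hsopt2 : sopt2 = (M : ℝ)⁻¹ * ∑ m, ∫ w, ‖dF xstar w‖ ^ 2 ∂(D m))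
    (x : Fin M → EuclideanSpace ℝ (Fin d)) :
    (M : ℝ)⁻¹ * ∑ m, (∫ ω, ‖dF (x m) (z m ω) - (M : ℝ)⁻¹ • ∑ j, dF (x j) (z j ω)‖ ^ 2 ∂P) ≤
      2 * sopt2 + (4 * L / M) * ∑ m, Breg f df (x m) xstar := by
  have := hD
  have hdF_meas (v) : Measurable (dF v) := hdFjm.comp (measurable_const.prodMk measurable_id)
  have hdF_memLp (m v) : MemLp (dF v) 2 (D m) :=
    (memLp_two_iff_integrable_sq_norm (hdF_meas v).aestronglyMeasurable).2 (hdFsq m v)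
  have hG (m) : MemLp (fun ω => dF (x m) (z m ω)) 2 P := by
    have := hdF_memLp m (x m)
    rw [← hlaw m] at this
    exact (memLp_map_measure_iff (hdF_meas _).aestronglyMeasurable (hz m).aemeasurable).1 this
  have hmoment (m) : ∫ ω, ‖dF (x m) (z m ω)‖ ^ 2 ∂P = ∫ w, ‖dF (x m) w‖ ^ 2 ∂(D m) := by
    rw [← hlaw m, integral_map (hz m).aemeasurable ((hdF_meas _).norm.pow_const 2).aestronglyMeasurable]
  have hper (m) : ∫ w, ‖dF (x m) w‖ ^ 2 ∂(D m) ≤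
      2 * ∫ w, ‖dF xstar w‖ ^ 2 ∂(D m) + 4 * L * Breg f df (x m) xstar := by
    rw [Breg, hf m, hf m, hdf m]
    exact integral_norm_grad_sq_le_of_convex_of_smooth hL
      ((hsmooth m).mono fun w hw => hw.inner_le_sub le_rfl)
      ((hsmooth m).mono fun w hw a b => (hw a b).2) (hFint m _) (hFint m _) (hdF_memLp m xstar)
  have hdev := sum_integral_norm_sub_average_sq_le univ (fun m _ => hG m)
  simp only [card_univ, Fintype.card_fin, hmoment] at hdev
  calc (M : ℝ)⁻¹ * ∑ m, (∫ ω, ‖dF (x m) (z m ω) - (M : ℝ)⁻¹ • ∑ j, dF (x j) (z j ω)‖ ^ 2 ∂P)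
      ≤ (M : ℝ)⁻¹ * ∑ m, (2 * ∫ w, ‖dF xstar w‖ ^ 2 ∂(D m) + 4 * L * Breg f df (x m) xstar) := by
        exact mul_le_mul_of_nonneg_left (hdev.trans (sum_le_sum fun m _ => hper m)) (by positivity)
    _ = 2 * sopt2 + (4 * L / M) * ∑ m, Breg f df (x m) xstar := by
        rw [hsopt2, sum_add_distrib, ← mul_sum, ← mul_sum]
        ring

/-- deviation of the stochastic gradients from their average. -/
theorem average_gradient_deviation {d M : ℕ} (hM : 0 < M) (L : ℝ) (hL : 0 < L) {Z : Type*} [MeasurableSpace Z] {Ω : Type*} [MeasurableSpace Ω]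
    (P : Measure Ω) [IsProbabilityMeasure P]
    (D : Fin M → Measure Z) (hD : ∀ m, IsProbabilityMeasure (D m))
    (F : EuclideanSpace ℝ (Fin d) → Z → ℝ) (dF : EuclideanSpace ℝ (Fin d) → Z → EuclideanSpace ℝ (Fin d))
    (f : EuclideanSpace ℝ (Fin d) → ℝ) (df : EuclideanSpace ℝ (Fin d) → EuclideanSpace ℝ (Fin d))
    (hsmooth : ∀ m, ∀ᵐ z ∂(D m), SmoothSC L 0 (fun x => F x z) (fun x => dF x z))
    (hf : ∀ m x, f x = ∫ z, F x z ∂(D m))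
    (hdf : ∀ m x, df x = ∫ z, dF x z ∂(D m))
    (hFjm : Measurable (fun p : EuclideanSpace ℝ (Fin d) × Z => F p.1 p.2))
    (hdFjm : Measurable (fun p : EuclideanSpace ℝ (Fin d) × Z => dF p.1 p.2))
    (hFint : ∀ m x, Integrable (fun z => F x z) (D m))
    (hdFsq : ∀ m x, Integrable (fun z => ‖dF x z‖ ^ 2) (D m))
    (xstar : EuclideanSpace ℝ (Fin d)) (hmin : ∀ y, f xstar ≤ f y)
    (z : Fin M → Ω → Z) (hz : ∀ m, Measurable (z m))
    (hindep : iIndepFun z P)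
    (hlaw : ∀ m, P.map (z m) = D m)
    (sopt2 : ℝ)
    (hsopt2 : sopt2 = (M : ℝ)⁻¹ * ∑ m, ∫ w, ‖dF xstar w‖ ^ 2 ∂(D m))
    (x : Fin M → EuclideanSpace ℝ (Fin d)) :
    (M : ℝ)⁻¹ * ∑ m, (∫ ω, ‖dF (x m) (z m ω) - (M : ℝ)⁻¹ • ∑ j, dF (x j) (z j ω)‖ ^ 2 ∂P) ≤
      2 * sopt2 + (4 * L / M) * ∑ m, Breg f df (x m) xstar :=
  average_gradient_deviation_general L hL P D hD F dF f df hsmooth hf hdf hdFjm hFint hdFsq xstar z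
    hz hlaw sopt2 hsopt2 x
end

section
/- Under the Local SGD dynamics with identical data in the finite-sum/expectation setting (f = E_{z∼D_m}[f(·,z)], f(·,z) almost surely L-smooth and μ-strongly convex with μ ≥ 0, g_t^m = ∇f(x_t^m, z_t^m) with all z_t^m independent), with stepsize 0 < γ ≤ 1/(2L) and synchronization times satisfying t_{p+1} - t_p ≤ H, let α = 1 - γμ, let t_p be a synchronization time and v = t_{p+1} - 1. Then Σ_{t=t_p}^{v} α^{v-t} E[V_t] ≤ (2γ(H-1)/α) Σ_{t=t_p}^{v} α^{v-t} E[D_f(x̂_t, x_*)] + 2γ²σ_opt²(H-1) Σ_{t=t_p}^{v} α^{v-t}, where V_t = (1/M) Σ_m ‖x_t^m - x̂_t‖², x̂_t = (1/M) Σ_m x_t^m, D_f(x,y) = f(x) - f(y) - ⟨∇f(y), x-y⟩, and σ_opt² = (1/M) Σ_m E_{z_m∼D_m}‖∇f(x_*, z_m)‖². -/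
open MeasureTheory ProbabilityTheory Finset
open scoped InnerProductSpace

/-!
Between two synchronizations every node runs plain SGD from a common point, so the deviation
`V = (1/M) ∑ₘ ‖xₘ - x̂‖²` starts the epoch at `0`, and one local step `xₘ ↦ xₘ - γ gₘ` raises it
by at most `(1/M) ∑ₘ (-2γ ⟪xₘ - x̂, gₘ⟫ + γ² ‖gₘ‖²)`. The fresh samples are independent of the
current iterates, so in expectation `gₘ` may be replaced by `∇f(xₘ)` and `‖gₘ‖²` by its
conditional mean, which co-coercivity bounds by `4L D_f(xₘ, x⋆) + 2σₘ²`. Strong convexity of `f`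
bounds `-⟪xₘ - x̂, ∇f(xₘ)⟫` by `f(x̂) - f(xₘ) - (μ/2)‖xₘ - x̂‖²`; writing `f(xₘ) - f(x̂)` through
Bregman divergences at `x⋆` (their linear parts cancel in the sum over the nodes) and using
`γ ≤ 1/(2L)` to absorb the terms `D_f(xₘ, x⋆)` leaves
`E V_{t+1} ≤ (1 - γμ) E V_t + 2γ E D_f(x̂_t, x⋆) + 2γ²σ²`.
Unrolling this recursion over the at most `H - 1` steps of an epoch gives the weighted bound.
-/

section Probability

variable {Ω Z β : Type*} [MeasurableSpace Ω] [mZ : MeasurableSpace Z] [MeasurableSpace β]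
  {P : Measure Ω}

lemma ProbabilityTheory.iIndepFun.indepFun_of_measurable_biSup {ι : Type*} {z : ι → Ω → Z}
    (hz : ∀ i, Measurable (z i)) (hindep : iIndepFun z P) {S : Set ι} {j : ι} (hj : j ∉ S)
    {X : Ω → β} (hX : Measurable[⨆ i ∈ S, mZ.comap (z i)] X) : IndepFun X (z j) P := by
  rw [IndepFun_iff_Indep]
  have hST := indep_iSup_of_disjoint (fun i => (hz i).comap_le) hindep.iIndep
    (Set.disjoint_singleton_right.2 hj)
  exact indep_of_indep_of_le_right (indep_of_indep_of_le_left hST hX.comap_le)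
    (le_iSup₂ (f := fun i (_ : i ∈ ({j} : Set _)) => mZ.comap (z i)) j rfl)

lemma ProbabilityTheory.IndepFun.integrable_prod_map [IsFiniteMeasure P] {X : Ω → β}
    {W : Ω → Z} (hX : Measurable X) (hW : Measurable W) (hXW : IndepFun X W P)
    {h : β × Z → ℝ} (hh : Measurable h) (hint : Integrable (fun ω => h (X ω, W ω)) P) :
    Integrable h ((P.map X).prod (P.map W)) := by
  rw [← (indepFun_iff_map_prod_eq_prod_map_map hX.aemeasurable hW.aemeasurable).1 hXW]
  exact (integrable_map_measure hh.aestronglyMeasurable (hX.prodMk hW).aemeasurable).2 hint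

lemma ProbabilityTheory.IndepFun.integral_comp_eq_integral_integral [IsProbabilityMeasure P]
    {X : Ω → β} {W : Ω → Z} (hX : Measurable X) (hW : Measurable W) (hXW : IndepFun X W P)
    {h : β × Z → ℝ} (hh : Measurable h) (hint : Integrable (fun ω => h (X ω, W ω)) P) :
    ∫ ω, h (X ω, W ω) ∂P = ∫ ω, ∫ w, h (X ω, w) ∂(P.map W) ∂P := by
  have : IsProbabilityMeasure (P.map W) := Measure.isProbabilityMeasure_map hW.aemeasurable
  have : IsProbabilityMeasure (P.map X) := Measure.isProbabilityMeasure_map hX.aemeasurable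
  calc ∫ ω, h (X ω, W ω) ∂P = ∫ q, h q ∂(P.map fun ω => (X ω, W ω)) :=
        (integral_map (hX.prodMk hW).aemeasurable hh.aestronglyMeasurable).symm
    _ = ∫ x, ∫ w, h (x, w) ∂(P.map W) ∂(P.map X) := by
        rw [(indepFun_iff_map_prod_eq_prod_map_map hX.aemeasurable hW.aemeasurable).1 hXW,
          integral_prod h (hXW.integrable_prod_map hX hW hh hint)]
    _ = ∫ ω, ∫ w, h (X ω, w) ∂(P.map W) ∂P :=
        integral_map hX.aemeasurable
          hh.stronglyMeasurable.integral_prod_right'.aestronglyMeasurable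

lemma ProbabilityTheory.IndepFun.integrable_integral_comp [IsProbabilityMeasure P]
    {X : Ω → β} {W : Ω → Z} (hX : Measurable X) (hW : Measurable W) (hXW : IndepFun X W P)
    {h : β × Z → ℝ} (hh : Measurable h) (hint : Integrable (fun ω => h (X ω, W ω)) P) :
    Integrable (fun ω => ∫ w, h (X ω, w) ∂(P.map W)) P := by
  have : IsProbabilityMeasure (P.map W) := Measure.isProbabilityMeasure_map hW.aemeasurable
  exact (integrable_map_measure hh.stronglyMeasurable.integral_prod_right'.aestronglyMeasurable
    hX.aemeasurable).1 (hXW.integrable_prod_map hX hW hh hint).integral_prod_left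

lemma MeasureTheory.MemLp.integrable_inner {E : Type*} [NormedAddCommGroup E]
    [InnerProductSpace ℝ E] {f g : Ω → E} (hf : MemLp f 2 P) (hg : MemLp g 2 P) :
    Integrable (fun ω => ⟪f ω, g ω⟫_ℝ) P :=
  (L2.integrable_inner (hf.toLp f) (hg.toLp g)).congr <| by
    filter_upwards [hf.coeFn_toLp, hg.coeFn_toLp] with ω hfω hgω
    rw [hfω, hgω]

lemma MeasureTheory.MemLp.integrable_norm_sq {E : Type*} [NormedAddCommGroup E] {f : Ω → E}
    (hf : MemLp f 2 P) : Integrable (fun ω => ‖f ω‖ ^ 2) P :=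
  (memLp_two_iff_integrable_sq_norm hf.1).1 hf

end Probability

lemma StrictMono.notMem_range_of_lt_of_lt {α : Type*} [Preorder α] {s : ℕ → α}
    (hs : StrictMono s) {p : ℕ} {a : α} (h₁ : s p < a) (h₂ : a < s (p + 1)) :
    a ∉ Set.range s := by
  rintro ⟨q, rfl⟩
  have := hs.lt_iff_lt.1 h₁
  have := hs.lt_iff_lt.1 h₂
  omega

section EpochSum

lemma le_add_sum_Ico_of_le_add {A C : ℕ → ℝ} {t₀ v : ℕ}
    (hstep : ∀ t ∈ Ico t₀ v, A (t + 1) ≤ A t + C t) {t : ℕ} (ht₀ : t₀ ≤ t) (htv : t ≤ v) :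
    A t ≤ A t₀ + ∑ τ ∈ Ico t₀ t, C τ := by
  induction t, ht₀ using Nat.le_induction with
  | base => simp
  | succ t ht ih =>
    rw [sum_Ico_succ_top ht]
    linarith [ih (by omega), hstep t (mem_Ico.2 ⟨ht, htv⟩)]

variable {α β K N : ℝ} {a b : ℕ → ℝ} {t₀ v : ℕ}

/-- With `a t₀ = 0`, every weighted term `α ^ (v - t) a t` is at most the full weighted sum
`∑_{t₀ ≤ τ < v} α ^ (v - (τ + 1)) (β b τ + K)`, and only `v - t₀` of them can be nonzero. -/
lemma sum_Icc_pow_mul_le (hα : 0 < α) (hβ : 0 ≤ β) (hK : 0 ≤ K) (htv : t₀ ≤ v)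
    (hN : ((v - t₀ : ℕ) : ℝ) ≤ N) (ha : a t₀ = 0) (hb : ∀ t ∈ Icc t₀ v, 0 ≤ b t)
    (hrec : ∀ t ∈ Ico t₀ v, a (t + 1) ≤ α * a t + (β * b t + K)) :
    ∑ t ∈ Icc t₀ v, α ^ (v - t) * a t ≤
      β * N / α * ∑ t ∈ Icc t₀ v, α ^ (v - t) * b t + K * N * ∑ t ∈ Icc t₀ v, α ^ (v - t) := by
  set C : ℕ → ℝ := fun t => α ^ (v - (t + 1)) * (β * b t + K)
  have hC : ∀ t ∈ Ico t₀ v, 0 ≤ C t := fun t ht => by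
    have := hb t (Ico_subset_Icc_self ht); positivity
  have hpow : ∀ t ∈ Ico t₀ v, α ^ (v - t) = α ^ (v - (t + 1)) * α := fun t ht => by
    rw [← pow_succ]; congr 1; have := (mem_Ico.1 ht).2; omega
  have hstep : ∀ t ∈ Ico t₀ v, α ^ (v - (t + 1)) * a (t + 1) ≤ α ^ (v - t) * a t + C t :=
    fun t ht => by
      calc α ^ (v - (t + 1)) * a (t + 1) ≤ α ^ (v - (t + 1)) * (α * a t + (β * b t + K)) :=
            mul_le_mul_of_nonneg_left (hrec t ht) (by positivity)
        _ = α ^ (v - t) * a t + C t := by rw [hpow t ht]; ring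
  have hS : ∑ t ∈ Ico t₀ v, C t ≤
      β / α * ∑ t ∈ Icc t₀ v, α ^ (v - t) * b t + K * ∑ t ∈ Icc t₀ v, α ^ (v - t) := by
    have hsplit : ∑ t ∈ Ico t₀ v, C t = β / α * ∑ t ∈ Ico t₀ v, α ^ (v - t) * b t +
        K * ∑ t ∈ Ico (t₀ + 1) (v + 1), α ^ (v - t) := by
      rw [← sum_Ico_add', mul_sum, mul_sum, ← sum_add_distrib]
      refine sum_congr rfl fun t ht => ?_
      simp only [C, hpow t ht]
      field_simp
    have hsub : Ico (t₀ + 1) (v + 1) ⊆ Icc t₀ v := fun t ht => by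
      simp only [mem_Ico, mem_Icc] at ht ⊢; omega
    rw [hsplit]
    refine add_le_add (mul_le_mul_of_nonneg_left ?_ (by positivity))
      (mul_le_mul_of_nonneg_left ?_ hK)
    · exact sum_le_sum_of_subset_of_nonneg Ico_subset_Icc_self fun t ht _ => by
        have := hb t ht; positivity
    · exact sum_le_sum_of_subset_of_nonneg hsub fun t _ _ => by positivity
  calc ∑ t ∈ Icc t₀ v, α ^ (v - t) * a t = ∑ t ∈ Ioc t₀ v, α ^ (v - t) * a t := by
        rw [Icc_eq_cons_Ioc htv, sum_cons, ha, mul_zero, zero_add]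
    _ ≤ (Ioc t₀ v).card • ∑ t ∈ Ico t₀ v, C t := sum_le_card_nsmul _ _ _ fun t ht => by
        obtain ⟨h₁, h₂⟩ := mem_Ioc.1 ht
        have := le_add_sum_Ico_of_le_add (A := fun t => α ^ (v - t) * a t) hstep h₁.le h₂
        rw [ha, mul_zero, zero_add] at this
        exact this.trans
          (sum_le_sum_of_subset_of_nonneg (Ico_subset_Ico_right h₂) fun τ hτ _ => hC τ hτ)
    _ ≤ N * ∑ t ∈ Ico t₀ v, C t := by
        rw [Nat.card_Ioc, nsmul_eq_mul]; gcongr; exact sum_nonneg hC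
    _ ≤ N * (β / α * ∑ t ∈ Icc t₀ v, α ^ (v - t) * b t + K * ∑ t ∈ Icc t₀ v, α ^ (v - t)) := by
        gcongr; exact (Nat.cast_nonneg _).trans hN
    _ = _ := by ring

end EpochSum

namespace SmoothSC

variable {d : ℕ} {L μ : ℝ}

local notation "ℝ^" n:max => EuclideanSpace ℝ (Fin n)

variable {g : ℝ^d → ℝ} {dg : ℝ^d → ℝ^d}

lemma breg_nonneg_s15 (hμ : 0 ≤ μ) (h : SmoothSC L μ g dg) (x y : ℝ^d) : 0 ≤ Breg g dg x y :=
  le_trans (by positivity) (h x y).1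

lemma le_inner (h : SmoothSC L μ g dg) (x y : ℝ^d) :
    g x - g y + μ / 2 * ‖x - y‖ ^ 2 ≤ ⟪x - y, dg x⟫_ℝ := by
  have hyx := (h y x).1
  rw [norm_sub_rev, ← neg_sub x y, inner_neg_right, real_inner_comm] at hyx
  linarith

lemma le_of_ne (h : SmoothSC L μ g dg) {x y : ℝ^d} (hxy : x ≠ y) : μ ≤ L := by
  have hpos : 0 < ‖x - y‖ ^ 2 := by
    have := norm_pos_iff.2 (sub_ne_zero.2 hxy); positivity
  nlinarith [(h x y).1, (h x y).2]

lemma one_sub_mul_pos [Nontrivial (ℝ^d)] (h : SmoothSC L μ g dg) {γ : ℝ}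
    (hγ : 0 ≤ γ) (hγL : 2 * γ * L ≤ 1) : 0 < 1 - γ * μ := by
  obtain ⟨u, hu⟩ := exists_ne (0 : ℝ^d)
  nlinarith [h.le_of_ne hu]

/-- Co-coercivity: compare the quadratic upper bound around `x` at `x - L⁻¹ (dg x - dg y)`
with the convexity lower bound around `y` at the same point. -/
lemma norm_sub_sq_le (hL : 0 < L) (hμ : 0 ≤ μ) (h : SmoothSC L μ g dg) (x y : ℝ^d) :
    ‖dg x - dg y‖ ^ 2 ≤ 2 * L * Breg g dg x y := by
  set w := dg x - dg y
  set u := x - L⁻¹ • w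
  have hconv := h.breg_nonneg_s15 hμ u y
  have hup := (h u x).2
  have hux : u - x = -(L⁻¹ • w) := by simp [u]
  have e1 : ⟪dg x, u - x⟫_ℝ = -(L⁻¹ * ⟪dg x, w⟫_ℝ) := by
    rw [hux, inner_neg_right, real_inner_smul_right]
  have e2 : ⟪dg y, u - y⟫_ℝ = ⟪dg y, x - y⟫_ℝ - L⁻¹ * ⟪dg y, w⟫_ℝ := by
    rw [show u - y = (x - y) - L⁻¹ • w by simp only [u]; abel, inner_sub_right,
      real_inner_smul_right]
  have e3 : L / 2 * ‖u - x‖ ^ 2 = L⁻¹ * ‖w‖ ^ 2 - ‖w‖ ^ 2 / (2 * L) := by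
    rw [hux, norm_neg, norm_smul, Real.norm_eq_abs, abs_inv, abs_of_pos hL]
    field_simp; ring
  have hw : L⁻¹ * ⟪dg x, w⟫_ℝ - L⁻¹ * ⟪dg y, w⟫_ℝ = L⁻¹ * ‖w‖ ^ 2 := by
    rw [← mul_sub, ← inner_sub_left, real_inner_self_eq_norm_sq]
  unfold Breg at hconv ⊢
  rw [e2] at hconv
  rw [e1, e3] at hup
  have key : ‖w‖ ^ 2 / (2 * L) ≤ g x - g y - ⟪dg y, x - y⟫_ℝ := by linarith
  rwa [div_le_iff₀ (by positivity), mul_comm] at key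

lemma norm_sub_le (hL : 0 < L) (hμ : 0 ≤ μ) (h : SmoothSC L μ g dg) (x y : ℝ^d) :
    ‖dg x - dg y‖ ≤ L * ‖x - y‖ := by
  refine le_of_sq_le_sq ?_ (by positivity)
  calc ‖dg x - dg y‖ ^ 2 ≤ 2 * L * Breg g dg x y := h.norm_sub_sq_le hL hμ x y
    _ ≤ 2 * L * (L / 2 * ‖x - y‖ ^ 2) := by gcongr; exact (h x y).2
    _ = (L * ‖x - y‖) ^ 2 := by ring

lemma norm_sq_le (hL : 0 < L) (hμ : 0 ≤ μ) (h : SmoothSC L μ g dg) (x y : ℝ^d) :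
    ‖dg x‖ ^ 2 ≤ 4 * L * Breg g dg x y + 2 * ‖dg y‖ ^ 2 := by
  have htri := pow_le_pow_left₀ (norm_nonneg _) (norm_le_norm_sub_add (dg x) (dg y)) 2
  nlinarith [h.norm_sub_sq_le hL hμ x y, sq_nonneg (‖dg x - dg y‖ - ‖dg y‖)]

lemma continuous (hL : 0 < L) (hμ : 0 ≤ μ) (h : SmoothSC L μ g dg) : Continuous g := by
  refine continuous_iff_continuousAt.2 fun y => ?_
  refine continuousAt_of_locally_lipschitz one_pos (‖dg y‖ + L) fun x hx => ?_
  rw [dist_eq_norm] at hx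
  have hinner := abs_real_inner_le_norm (dg y) (x - y)
  have hquad : ‖x - y‖ ^ 2 ≤ ‖x - y‖ := by nlinarith [norm_nonneg (x - y)]
  rw [Real.dist_eq, dist_eq_norm, abs_le]
  have hLr := mul_le_mul_of_nonneg_left hquad hL.le
  have hbreg := h.breg_nonneg_s15 hμ x y
  unfold Breg at hbreg
  constructor <;>
    nlinarith [(h x y).2, abs_le.1 hinner, mul_nonneg hL.le (norm_nonneg (x - y))]

lemma continuous_grad (hL : 0 < L) (hμ : 0 ≤ μ) (h : SmoothSC L μ g dg) : Continuous dg :=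
  (LipschitzWith.of_dist_le_mul (K := L.toNNReal) fun x y => by
    simpa [dist_eq_norm, Real.coe_toNNReal _ hL.le] using h.norm_sub_le hL hμ x y).continuous

variable {Ω : Type*} [MeasurableSpace Ω] {P : Measure Ω} [IsFiniteMeasure P] {V : Ω → ℝ^d}

lemma memLp_grad_comp (hL : 0 < L) (hμ : 0 ≤ μ) (h : SmoothSC L μ g dg) (hV : MemLp V 2 P) :
    MemLp (fun ω => dg (V ω)) 2 P := by
  refine MemLp.of_le ((hV.norm.const_mul L).add (memLp_const ‖dg 0‖))
    ((h.continuous_grad hL hμ).comp_aestronglyMeasurable hV.1) (ae_of_all _ fun ω => ?_)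
  have hlip := h.norm_sub_le hL hμ (V ω) 0
  rw [sub_zero] at hlip
  simp only [Pi.add_apply, Real.norm_of_nonneg (by positivity : 0 ≤ L * ‖V ω‖ + ‖dg 0‖)]
  linarith [norm_le_norm_sub_add (dg (V ω)) (dg 0)]

lemma integrable_breg_comp (hL : 0 < L) (hμ : 0 ≤ μ) (h : SmoothSC L μ g dg)
    (hV : MemLp V 2 P) (y : ℝ^d) : Integrable (fun ω => Breg g dg (V ω) y) P := by
  have hcont : Continuous fun x => Breg g dg x y :=
    ((h.continuous hL hμ).sub continuous_const).sub
      (continuous_const.inner (continuous_id.sub continuous_const))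
  refine Integrable.mono' (((hV.sub (memLp_const y)).integrable_norm_sq).const_mul (L / 2))
    (hcont.comp_aestronglyMeasurable hV.1) (ae_of_all _ fun ω => ?_)
  rw [Real.norm_of_nonneg (h.breg_nonneg_s15 hμ _ _)]
  exact (h (V ω) y).2

end SmoothSC

section StochasticModel

variable {d : ℕ}

local notation "ℝ^" n:max => EuclideanSpace ℝ (Fin n)

/-- The paper's expectation setting `f = 𝔼_{z∼D} F(·, z)` for one data distribution `D`. -/
structure SmoothSCExpectation {Z : Type*} [MeasurableSpace Z] (D : Measure Z) (L μ : ℝ)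
    (F : ℝ^d → Z → ℝ) (dF : ℝ^d → Z → ℝ^d) (f : ℝ^d → ℝ) (df : ℝ^d → ℝ^d) : Prop where
  ae_smoothSC : ∀ᵐ z ∂D, SmoothSC L μ (fun x => F x z) (fun x => dF x z)
  eq_integral : ∀ x, f x = ∫ z, F x z ∂D
  grad_eq_integral : ∀ x, df x = ∫ z, dF x z ∂D
  measurable_grad : Measurable fun p : ℝ^d × Z => dF p.1 p.2
  integrable : ∀ x, Integrable (fun z => F x z) D
  integrable_norm_grad_sq : ∀ x, Integrable (fun z => ‖dF x z‖ ^ 2) D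

namespace SmoothSCExpectation

variable {Z : Type*} [MeasurableSpace Z] {D : Measure Z} {L μ : ℝ} {F : ℝ^d → Z → ℝ}
  {dF : ℝ^d → Z → ℝ^d} {f : ℝ^d → ℝ} {df : ℝ^d → ℝ^d}

lemma memLp_grad (h : SmoothSCExpectation D L μ F dF f df) (x : ℝ^d) : MemLp (dF x) 2 D :=
  (memLp_two_iff_integrable_sq_norm
    (h.measurable_grad.comp (measurable_const.prodMk measurable_id)).aestronglyMeasurable).2
    (h.integrable_norm_grad_sq x)

section FiniteMeasure

variable [IsFiniteMeasure D]

lemma integral_inner_grad (h : SmoothSCExpectation D L μ F dF f df) (x v : ℝ^d) :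
    ∫ z, ⟪v, dF x z⟫_ℝ ∂D = ⟪v, df x⟫_ℝ := by
  rw [integral_inner ((h.memLp_grad x).integrable one_le_two), h.grad_eq_integral]

lemma integrable_breg (h : SmoothSCExpectation D L μ F dF f df) (x y : ℝ^d) :
    Integrable (fun z => Breg (fun x => F x z) (fun x => dF x z) x y) D :=
  ((h.integrable x).sub (h.integrable y)).sub
    (((h.memLp_grad y).integrable one_le_two).inner_const _)

lemma integral_breg (h : SmoothSCExpectation D L μ F dF f df) (x y : ℝ^d) :
    ∫ z, Breg (fun x => F x z) (fun x => dF x z) x y ∂D = Breg f df x y := by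
  have hinner := ((h.memLp_grad y).integrable one_le_two).inner_const (𝕜 := ℝ) (x - y)
  have hxy : Integrable (fun z => F x z - F y z) D := (h.integrable x).sub (h.integrable y)
  simp only [Breg]
  rw [integral_sub hxy hinner, integral_sub (h.integrable x) (h.integrable y), h.eq_integral,
    h.eq_integral]
  simp only [real_inner_comm (x - y), h.integral_inner_grad]

lemma integral_mul_inner_add_mul_norm_sq (h : SmoothSCExpectation D L μ F dF f df)
    (a b : ℝ) (u v : ℝ^d) :
    ∫ z, (a * ⟪u, dF v z⟫_ℝ + b * ‖dF v z‖ ^ 2) ∂D =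
      a * ⟪u, df v⟫_ℝ + b * ∫ z, ‖dF v z‖ ^ 2 ∂D := by
  rw [integral_add (((h.memLp_grad v).integrable one_le_two).const_inner u |>.const_mul a)
      ((h.integrable_norm_grad_sq v).const_mul b), integral_const_mul, integral_const_mul,
    h.integral_inner_grad]

end FiniteMeasure

section ProbabilityMeasure

variable [IsProbabilityMeasure D]

lemma smoothSC (h : SmoothSCExpectation D L μ F dF f df) : SmoothSC L μ f df := by
  intro x y
  have hlow := integral_mono_ae (integrable_const (μ / 2 * ‖x - y‖ ^ 2)) (h.integrable_breg x y)
    (h.ae_smoothSC.mono fun z hz => (hz x y).1)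
  have hup := integral_mono_ae (h.integrable_breg x y) (integrable_const (L / 2 * ‖x - y‖ ^ 2))
    (h.ae_smoothSC.mono fun z hz => (hz x y).2)
  simp only [integral_const, probReal_univ, one_smul, h.integral_breg] at hlow hup
  exact ⟨hlow, hup⟩

lemma integral_norm_grad_sq_le (hL : 0 < L) (hμ : 0 ≤ μ)
    (h : SmoothSCExpectation D L μ F dF f df) (x y : ℝ^d) :
    ∫ z, ‖dF x z‖ ^ 2 ∂D ≤ 4 * L * Breg f df x y + 2 * ∫ z, ‖dF y z‖ ^ 2 ∂D := by
  have hbound : ∫ z, ‖dF x z‖ ^ 2 ∂D ≤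
      ∫ z, (4 * L * Breg (fun x => F x z) (fun x => dF x z) x y + 2 * ‖dF y z‖ ^ 2) ∂D :=
    integral_mono_ae (h.integrable_norm_grad_sq x)
      (((h.integrable_breg x y).const_mul (4 * L)).add
        ((h.integrable_norm_grad_sq y).const_mul 2))
      (h.ae_smoothSC.mono fun z hz => hz.norm_sq_le hL hμ x y)
  rwa [integral_add ((h.integrable_breg x y).const_mul _)
      ((h.integrable_norm_grad_sq y).const_mul _), integral_const_mul, integral_const_mul,
    h.integral_breg] at hbound

end ProbabilityMeasure

lemma measurable_mul_inner_add_mul_norm_sq (h : SmoothSCExpectation D L μ F dF f df)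
    (a b : ℝ) :
    Measurable fun q : (ℝ^d × ℝ^d) × Z => a * ⟪q.1.1, dF q.1.2 q.2⟫_ℝ + b * ‖dF q.1.2 q.2‖ ^ 2 := by
  have hg : Measurable fun q : (ℝ^d × ℝ^d) × Z => dF q.1.2 q.2 :=
    h.measurable_grad.comp ((measurable_snd.comp measurable_fst).prodMk measurable_snd)
  exact (((measurable_fst.comp measurable_fst).inner hg).const_mul a).add
    ((hg.norm.pow_const 2).const_mul b)

variable {Ω : Type*} [MeasurableSpace Ω] {P : Measure Ω} {U V : Ω → ℝ^d} {W : Ω → Z}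

lemma memLp_grad_comp (hL : 0 < L) (hμ : 0 ≤ μ) (h : SmoothSCExpectation D L μ F dF f df)
    (hV : MemLp V 2 P) (hW : Measurable W) (hlaw : P.map W = D) :
    MemLp (fun ω => dF (V ω) (W ω)) 2 P := by
  have hW0 : MemLp (fun ω => dF 0 (W ω)) 2 P :=
    (hlaw ▸ h.memLp_grad 0 : MemLp (dF 0) 2 (P.map W)).comp_of_map hW.aemeasurable
  have hsmooth : ∀ᵐ ω ∂P, SmoothSC L μ (fun x => F x (W ω)) (fun x => dF x (W ω)) :=
    ae_of_ae_map hW.aemeasurable (hlaw ▸ h.ae_smoothSC)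
  refine MemLp.of_le ((hV.norm.const_mul L).add hW0.norm)
    (h.measurable_grad.comp_aemeasurable
      (hV.1.aemeasurable.prodMk hW.aemeasurable)).aestronglyMeasurable
    (hsmooth.mono fun ω hω => ?_)
  have hlip := hω.norm_sub_le hL hμ (V ω) 0
  rw [sub_zero] at hlip
  simp only [Pi.add_apply, Real.norm_of_nonneg (by positivity : 0 ≤ L * ‖V ω‖ + ‖dF 0 (W ω)‖)]
  linarith [norm_le_norm_sub_add (dF (V ω) (W ω)) (dF 0 (W ω))]

variable [IsProbabilityMeasure P] [IsFiniteMeasure D]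

/-- Independence of the sample `W ∼ D` from `(U, V)` lets the stochastic gradient `dF (V, W)`
be averaged over `W` first. -/
lemma integral_mul_inner_add_mul_norm_sq_comp (h : SmoothSCExpectation D L μ F dF f df)
    (hU : Measurable U) (hV : Measurable V) (hW : Measurable W)
    (hind : IndepFun (fun ω => (U ω, V ω)) W P) (hlaw : P.map W = D) (a b : ℝ)
    (hint : Integrable (fun ω => a * ⟪U ω, dF (V ω) (W ω)⟫_ℝ + b * ‖dF (V ω) (W ω)‖ ^ 2) P) :
    ∫ ω, (a * ⟪U ω, dF (V ω) (W ω)⟫_ℝ + b * ‖dF (V ω) (W ω)‖ ^ 2) ∂P =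
      ∫ ω, (a * ⟪U ω, df (V ω)⟫_ℝ + b * ∫ z, ‖dF (V ω) z‖ ^ 2 ∂D) ∂P := by
  rw [hind.integral_comp_eq_integral_integral (hU.prodMk hV) hW
    (h.measurable_mul_inner_add_mul_norm_sq a b) hint, hlaw]
  simp only [h.integral_mul_inner_add_mul_norm_sq]

lemma integrable_mul_inner_add_mul_norm_sq_comp (h : SmoothSCExpectation D L μ F dF f df)
    (hU : Measurable U) (hV : Measurable V) (hW : Measurable W)
    (hind : IndepFun (fun ω => (U ω, V ω)) W P) (hlaw : P.map W = D) (a b : ℝ)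
    (hint : Integrable (fun ω => a * ⟪U ω, dF (V ω) (W ω)⟫_ℝ + b * ‖dF (V ω) (W ω)‖ ^ 2) P) :
    Integrable (fun ω => a * ⟪U ω, df (V ω)⟫_ℝ + b * ∫ z, ‖dF (V ω) z‖ ^ 2 ∂D) P := by
  have := hind.integrable_integral_comp (hU.prodMk hV) hW
    (h.measurable_mul_inner_add_mul_norm_sq a b) hint
  simpa only [hlaw, h.integral_mul_inner_add_mul_norm_sq] using this

end SmoothSCExpectation

end StochasticModel

namespace LocalSGD

section Average

variable {E : Type*} [NormedAddCommGroup E] [InnerProductSpace ℝ E] {M : ℕ}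

/-- The virtual average `x̂` of the paper. -/
noncomputable def avg (y : Fin M → E) : E := (M : ℝ)⁻¹ • ∑ j, y j

/-- The iterate deviation `V` of the paper. -/
noncomputable def deviation (y : Fin M → E) : ℝ := (M : ℝ)⁻¹ * ∑ m, ‖y m - avg y‖ ^ 2

lemma sum_sub_avg (y : Fin M → E) : ∑ m, (y m - avg y) = 0 := by
  rcases M.eq_zero_or_pos with rfl | hM
  · simp
  rw [sum_sub_distrib, sum_const, card_univ, Fintype.card_fin, avg, ← Nat.cast_smul_eq_nsmul ℝ,
    smul_smul, mul_inv_cancel₀ (by positivity), one_smul, sub_self]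

lemma avg_sub_smul (y g : Fin M → E) (γ : ℝ) :
    avg (fun m => y m - γ • g m) = avg y - γ • avg g := by
  simp only [avg, sum_sub_distrib, smul_sub, ← smul_sum, smul_comm γ]

lemma continuous_avg : Continuous (avg : (Fin M → E) → E) := by
  unfold avg; fun_prop

lemma sum_norm_sub_avg_sq_le (g : Fin M → E) : ∑ m, ‖g m - avg g‖ ^ 2 ≤ ∑ m, ‖g m‖ ^ 2 := by
  have hcross : ∑ m, ⟪g m - avg g, avg g⟫_ℝ = 0 := by
    rw [← sum_inner, sum_sub_avg, inner_zero_left]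
  have hexp : ∀ m, ‖g m‖ ^ 2 = ‖g m - avg g‖ ^ 2 + 2 * ⟪g m - avg g, avg g⟫_ℝ + ‖avg g‖ ^ 2 :=
    fun m => by rw [← norm_add_sq_real, sub_add_cancel]
  simp only [hexp, sum_add_distrib, ← mul_sum, hcross]
  have : 0 ≤ ∑ _m : Fin M, ‖avg g‖ ^ 2 := by positivity
  linarith

lemma deviation_nonneg (y : Fin M → E) : 0 ≤ deviation y := by
  unfold deviation; positivity

lemma deviation_eq_zero_of_forall_eq {y : Fin M → E} (h : ∀ i j, y i = y j) :
    deviation y = 0 := by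
  rcases M.eq_zero_or_pos with rfl | hM
  · simp [deviation]
  have hy : avg y = y ⟨0, hM⟩ := by
    rw [avg, sum_congr rfl fun j _ => h j ⟨0, hM⟩, sum_const, card_univ, Fintype.card_fin,
      ← Nat.cast_smul_eq_nsmul ℝ, smul_smul, inv_mul_cancel₀ (by positivity), one_smul]
  simp [deviation, hy, h _ ⟨0, hM⟩]

/-- The mean step `ĝ` drops out of the cross terms because `∑ₘ (yₘ - ŷ) = 0`, and it only
lowers the second-moment term. -/
lemma deviation_sub_smul_le (y g : Fin M → E) (γ : ℝ) :
    deviation (fun m => y m - γ • g m) ≤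
      deviation y + (M : ℝ)⁻¹ * ∑ m, (-(2 * γ) * ⟪y m - avg y, g m⟫_ℝ + γ ^ 2 * ‖g m‖ ^ 2) := by
  have hexp : ∀ m, ‖(y m - γ • g m) - avg (fun m => y m - γ • g m)‖ ^ 2 =
      ‖y m - avg y‖ ^ 2 - 2 * γ * ⟪y m - avg y, g m⟫_ℝ + 2 * γ * ⟪y m - avg y, avg g⟫_ℝ +
        γ ^ 2 * ‖g m - avg g‖ ^ 2 := fun m => by
    rw [avg_sub_smul, show y m - γ • g m - (avg y - γ • avg g) =
      (y m - avg y) - γ • (g m - avg g) by rw [smul_sub]; abel, norm_sub_sq_real,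
      real_inner_smul_right, inner_sub_right, norm_smul, mul_pow, Real.norm_eq_abs, sq_abs]
    ring
  have hcross : ∑ m, ⟪y m - avg y, avg g⟫_ℝ = 0 := by
    rw [← sum_inner, sum_sub_avg, inner_zero_left]
  have hvar := mul_le_mul_of_nonneg_left (sum_norm_sub_avg_sq_le g) (sq_nonneg γ)
  unfold deviation
  rw [← mul_add, sum_congr rfl fun m _ => hexp m]
  gcongr
  simp only [sum_add_distrib, sum_sub_distrib, ← mul_sum, hcross, mul_zero, add_zero]
  linarith

variable {Ω : Type*} [MeasurableSpace Ω] {P : Measure Ω} {X : Fin M → Ω → E}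

lemma memLp_avg (hX : ∀ m, MemLp (X m) 2 P) : MemLp (fun ω => avg fun j => X j ω) 2 P :=
  (memLp_finsetSum univ fun j _ => hX j).const_smul ((M : ℝ)⁻¹)

lemma integrable_deviation (hX : ∀ m, MemLp (X m) 2 P) :
    Integrable (fun ω => deviation fun j => X j ω) P :=
  (integrable_finsetSum univ fun m _ =>
    ((hX m).sub (memLp_avg hX)).integrable_norm_sq).const_mul _

end Average

section Step

variable {d M : ℕ}

local notation "ℝ^" n:max => EuclideanSpace ℝ (Fin n)

variable {Z Ω : Type*} [MeasurableSpace Z] [MeasurableSpace Ω] {P : Measure Ω} {L μ γ : ℝ}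
  {F : ℝ^d → Z → ℝ} {dF : ℝ^d → Z → ℝ^d} {f : ℝ^d → ℝ} {df : ℝ^d → ℝ^d}

/-- Summed over the nodes, the terms `⟪df x⋆, yₘ - ŷ⟫` cancel. -/
lemma deviation_add_mean_step_le (hM : 0 < M) (hμ : 0 ≤ μ) (hγ : 0 ≤ γ) (hγL : 2 * γ * L ≤ 1)
    (hf : SmoothSC L μ f df) (y : Fin M → ℝ^d) (xstar : ℝ^d) (ψ σ : Fin M → ℝ)
    (hψ : ∀ m, ψ m ≤ 4 * L * Breg f df (y m) xstar + 2 * σ m) :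
    deviation y + (M : ℝ)⁻¹ * ∑ m, (-(2 * γ) * ⟪y m - avg y, df (y m)⟫_ℝ + γ ^ 2 * ψ m) ≤
      (1 - γ * μ) * deviation y +
        (2 * γ * Breg f df (avg y) xstar + 2 * γ ^ 2 * ((M : ℝ)⁻¹ * ∑ m, σ m)) := by
  have hnode : ∀ m, -(2 * γ) * ⟪y m - avg y, df (y m)⟫_ℝ + γ ^ 2 * ψ m ≤
      -(γ * μ) * ‖y m - avg y‖ ^ 2 + 2 * γ * Breg f df (avg y) xstar
        - 2 * γ * ⟪df xstar, y m - avg y⟫_ℝ + 2 * γ ^ 2 * σ m := fun m => by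
    have hconv := mul_le_mul_of_nonneg_left (hf.le_inner (y m) (avg y))
      (by positivity : 0 ≤ 2 * γ)
    have hbreg : Breg f df (y m) xstar - Breg f df (avg y) xstar =
        f (y m) - f (avg y) - ⟪df xstar, y m - avg y⟫_ℝ := by
      simp only [Breg, ← sub_sub_sub_cancel_right (y m) (avg y) xstar, inner_sub_right]; ring
    have hψm := mul_le_mul_of_nonneg_left (hψ m) (sq_nonneg γ)
    have hB := mul_nonneg (by nlinarith : 0 ≤ 2 * γ - 4 * L * γ ^ 2)
      (hf.breg_nonneg_s15 hμ (y m) xstar)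
    nlinarith
  have hcross : ∑ m, ⟪df xstar, y m - avg y⟫_ℝ = 0 := by
    rw [← inner_sum, sum_sub_avg, inner_zero_right]
  calc _ ≤ deviation y + (M : ℝ)⁻¹ * ∑ m, (-(γ * μ) * ‖y m - avg y‖ ^ 2
          + 2 * γ * Breg f df (avg y) xstar - 2 * γ * ⟪df xstar, y m - avg y⟫_ℝ
          + 2 * γ ^ 2 * σ m) :=
        add_le_add_right
          (mul_le_mul_of_nonneg_left (sum_le_sum fun m _ => hnode m) (by positivity)) _
    _ = _ := by
      simp only [sum_add_distrib, sum_sub_distrib, ← mul_sum, hcross, sum_const, card_univ,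
        Fintype.card_fin, nsmul_eq_mul, deviation]
      field_simp
      ring

theorem integral_deviation_step_le [IsProbabilityMeasure P] (hM : 0 < M) (hL : 0 < L)
    (hμ : 0 ≤ μ) (hγ : 0 ≤ γ) (hγL : 2 * γ * L ≤ 1) {D : Fin M → Measure Z}
    [∀ m, IsProbabilityMeasure (D m)] (hO : ∀ m, SmoothSCExpectation (D m) L μ F dF f df)
    {X : Fin M → Ω → ℝ^d} {W : Fin M → Ω → Z} (hXm : ∀ m, Measurable (X m))
    (hX : ∀ m, MemLp (X m) 2 P) (hW : ∀ m, Measurable (W m))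
    (hind : ∀ m, IndepFun (fun ω j => X j ω) (W m) P) (hlaw : ∀ m, P.map (W m) = D m)
    (xstar : ℝ^d) :
    ∫ ω, deviation (fun m => X m ω - γ • dF (X m ω) (W m ω)) ∂P ≤
      (1 - γ * μ) * ∫ ω, deviation (fun m => X m ω) ∂P +
        (2 * γ * ∫ ω, Breg f df (avg fun m => X m ω) xstar ∂P +
          2 * γ ^ 2 * ((M : ℝ)⁻¹ * ∑ m, ∫ z, ‖dF xstar z‖ ^ 2 ∂(D m))) := by
  have hf : SmoothSC L μ f df := (hO ⟨0, hM⟩).smoothSC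
  have hdev := integrable_deviation hX
  have hB : Integrable (fun ω => Breg f df (avg fun m => X m ω) xstar) P :=
    hf.integrable_breg_comp hL hμ (memLp_avg hX) xstar
  have hBσ : Integrable (fun ω => 2 * γ * Breg f df (avg fun m => X m ω) xstar
      + 2 * γ ^ 2 * ((M : ℝ)⁻¹ * ∑ m, ∫ z, ‖dF xstar z‖ ^ 2 ∂(D m))) P :=
    (hB.const_mul _).add (integrable_const _)
  have hU : ∀ m, Measurable fun ω => X m ω - avg (fun j => X j ω) := fun m =>
    (hXm m).sub (continuous_avg.measurable.comp (measurable_pi_lambda _ hXm))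
  have hindU : ∀ m, IndepFun (fun ω => (X m ω - avg (fun j => X j ω), X m ω)) (W m) P :=
    fun m => (hind m).comp (((measurable_pi_apply m).sub continuous_avg.measurable).prodMk
      (measurable_pi_apply m)) measurable_id
  -- `cbar m` is the mean of the step term `c m` conditional on the current iterates
  set c : Fin M → Ω → ℝ := fun m ω => -(2 * γ) * ⟪X m ω - avg (fun j => X j ω),
    dF (X m ω) (W m ω)⟫_ℝ + γ ^ 2 * ‖dF (X m ω) (W m ω)‖ ^ 2
  set cbar : Fin M → Ω → ℝ := fun m ω => -(2 * γ) * ⟪X m ω - avg (fun j => X j ω),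
    df (X m ω)⟫_ℝ + γ ^ 2 * ∫ z, ‖dF (X m ω) z‖ ^ 2 ∂(D m)
  have hc : ∀ m, Integrable (c m) P := fun m => by
    have hG := (hO m).memLp_grad_comp hL hμ (hX m) (hW m) (hlaw m)
    exact ((((hX m).sub (memLp_avg hX)).integrable_inner hG).const_mul _).add
      (hG.integrable_norm_sq.const_mul _)
  have hcbar : ∀ m, Integrable (cbar m) P := fun m =>
    (hO m).integrable_mul_inner_add_mul_norm_sq_comp (hU m) (hXm m) (hW m) (hindU m) (hlaw m)
      _ _ (hc m)
  have hmean : ∀ m, ∫ ω, c m ω ∂P = ∫ ω, cbar m ω ∂P := fun m =>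
    (hO m).integral_mul_inner_add_mul_norm_sq_comp (hU m) (hXm m) (hW m) (hindU m) (hlaw m)
      _ _ (hc m)
  calc ∫ ω, deviation (fun m => X m ω - γ • dF (X m ω) (W m ω)) ∂P
      ≤ ∫ ω, (deviation (fun m => X m ω) + (M : ℝ)⁻¹ * ∑ m, c m ω) ∂P :=
        integral_mono_of_nonneg (ae_of_all _ fun ω => deviation_nonneg _)
          (hdev.add ((integrable_finsetSum _ fun m _ => hc m).const_mul _))
          (ae_of_all _ fun ω => deviation_sub_smul_le _ _ γ)
    _ = ∫ ω, (deviation (fun m => X m ω) + (M : ℝ)⁻¹ * ∑ m, cbar m ω) ∂P := by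
        rw [integral_add hdev ((integrable_finsetSum _ fun m _ => hc m).const_mul _),
          integral_add hdev ((integrable_finsetSum _ fun m _ => hcbar m).const_mul _),
          integral_const_mul, integral_const_mul, integral_finsetSum _ fun m _ => hc m,
          integral_finsetSum _ fun m _ => hcbar m]
        simp only [hmean]
    _ ≤ ∫ ω, ((1 - γ * μ) * deviation (fun m => X m ω) +
          (2 * γ * Breg f df (avg fun m => X m ω) xstar +
            2 * γ ^ 2 * ((M : ℝ)⁻¹ * ∑ m, ∫ z, ‖dF xstar z‖ ^ 2 ∂(D m)))) ∂P :=
        integral_mono (hdev.add ((integrable_finsetSum _ fun m _ => hcbar m).const_mul _))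
          ((hdev.const_mul _).add hBσ) fun ω =>
          deviation_add_mean_step_le hM hμ hγ hγL hf _ xstar _ _
            fun m => (hO m).integral_norm_grad_sq_le hL hμ _ _
    _ = _ := by
        rw [integral_add (hdev.const_mul _) hBσ, integral_add (hB.const_mul _) (integrable_const _),
          integral_const_mul, integral_const_mul, integral_const, probReal_univ, one_smul]

end Step

section Iterates

variable {d M : ℕ}

local notation "ℝ^" n:max => EuclideanSpace ℝ (Fin n)

variable {Z Ω : Type*} {γ : ℝ} {dF : ℝ^d → Z → ℝ^d} {z : ℕ → Fin M → Ω → Z}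
  {x : ℕ → Fin M → Ω → ℝ^d} {x0 : ℝ^d} {S : Set ℕ}

lemma measurable_iterate [mZ : MeasurableSpace Z]
    (hdF : Measurable fun p : ℝ^d × Z => dF p.1 p.2) (hx0 : ∀ m ω, x 0 m ω = x0)
    (hsync : ∀ t m ω, t + 1 ∈ S →
      x (t + 1) m ω = avg fun j => x t j ω - γ • dF (x t j ω) (z t j ω))
    (hlocal : ∀ t m ω, t + 1 ∉ S → x (t + 1) m ω = x t m ω - γ • dF (x t m ω) (z t m ω))
    (t : ℕ) :
    Measurable[⨆ i ∈ {i : ℕ × Fin M | i.1 < t}, mZ.comap (z i.1 i.2)] fun ω j => x t j ω := by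
  induction t with
  | zero => simp only [hx0]; exact measurable_const
  | succ t ih =>
    set 𝓕 := ⨆ i ∈ {i : ℕ × Fin M | i.1 < t + 1}, mZ.comap (z i.1 i.2)
    have hx : ∀ j, Measurable[𝓕] (x t j) := fun j =>
      ((measurable_pi_apply j).comp ih).mono (biSup_mono fun i hi => Nat.lt_succ_of_lt hi) le_rfl
    have hz : ∀ j, Measurable[𝓕] (z t j) := fun j =>
      (comap_measurable (z t j)).mono
        (le_iSup₂ (f := fun i (_ : i ∈ {i : ℕ × Fin M | i.1 < t + 1}) => mZ.comap (z i.1 i.2))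
          (t, j) (Nat.lt_succ_self t)) le_rfl
    have hstep : ∀ j, Measurable[𝓕] fun ω => x t j ω - γ • dF (x t j ω) (z t j ω) := fun j =>
      (hx j).sub ((hdF.comp ((hx j).prodMk (hz j))).const_smul γ)
    refine measurable_pi_lambda _ fun m => ?_
    by_cases h : t + 1 ∈ S
    · rw [show (fun ω => x (t + 1) m ω) = _ from funext fun ω => hsync t m ω h]
      exact continuous_avg.measurable.comp (measurable_pi_lambda _ hstep)
    · rw [show (fun ω => x (t + 1) m ω) = _ from funext fun ω => hlocal t m ω h]
      exact hstep m

lemma indepFun_iterate [MeasurableSpace Z] [MeasurableSpace Ω] {P : Measure Ω}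
    (hz : ∀ t m, Measurable (z t m)) (hindep : iIndepFun (fun p : ℕ × Fin M => z p.1 p.2) P)
    (hdF : Measurable fun p : ℝ^d × Z => dF p.1 p.2) (hx0 : ∀ m ω, x 0 m ω = x0)
    (hsync : ∀ t m ω, t + 1 ∈ S →
      x (t + 1) m ω = avg fun j => x t j ω - γ • dF (x t j ω) (z t j ω))
    (hlocal : ∀ t m ω, t + 1 ∉ S → x (t + 1) m ω = x t m ω - γ • dF (x t m ω) (z t m ω))
    (t : ℕ) (m : Fin M) : IndepFun (fun ω j => x t j ω) (z t m) P := by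
  have hnew : ((t, m) : ℕ × Fin M) ∉ {i : ℕ × Fin M | i.1 < t} := lt_irrefl t
  exact hindep.indepFun_of_measurable_biSup (fun i : ℕ × Fin M => hz i.1 i.2) hnew
    (measurable_iterate hdF hx0 hsync hlocal t)

lemma memLp_iterate [MeasurableSpace Z] [MeasurableSpace Ω] {P : Measure Ω} [IsFiniteMeasure P]
    {L μ : ℝ} (hL : 0 < L) (hμ : 0 ≤ μ) {D : Fin M → Measure Z} {F : ℝ^d → Z → ℝ}
    {f : ℝ^d → ℝ} {df : ℝ^d → ℝ^d} (hO : ∀ m, SmoothSCExpectation (D m) L μ F dF f df)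
    (hz : ∀ t m, Measurable (z t m)) (hlaw : ∀ t m, P.map (z t m) = D m)
    (hx0 : ∀ m ω, x 0 m ω = x0)
    (hsync : ∀ t m ω, t + 1 ∈ S →
      x (t + 1) m ω = avg fun j => x t j ω - γ • dF (x t j ω) (z t j ω))
    (hlocal : ∀ t m ω, t + 1 ∉ S → x (t + 1) m ω = x t m ω - γ • dF (x t m ω) (z t m ω))
    (t : ℕ) (m : Fin M) : MemLp (x t m) 2 P := by
  induction t generalizing m with
  | zero => rw [show x 0 m = fun _ => x0 from funext (hx0 m)]; exact memLp_const x0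
  | succ t ih =>
    have hstep : ∀ j, MemLp (fun ω => x t j ω - γ • dF (x t j ω) (z t j ω)) 2 P := fun j =>
      (ih j).sub (((hO j).memLp_grad_comp hL hμ (ih j) (hz t j) (hlaw t j)).const_smul γ)
    by_cases h : t + 1 ∈ S
    · rw [show x (t + 1) m = _ from funext fun ω => hsync t m ω h]
      exact memLp_avg hstep
    · rw [show x (t + 1) m = _ from funext fun ω => hlocal t m ω h]
      exact hstep m

lemma deviation_iterate_eq_zero (hx0 : ∀ m ω, x 0 m ω = x0)
    (hsync : ∀ t m ω, t + 1 ∈ S →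
      x (t + 1) m ω = avg fun j => x t j ω - γ • dF (x t j ω) (z t j ω))
    {t : ℕ} (ht : t ∈ S) (ω : Ω) : deviation (fun m => x t m ω) = 0 :=
  deviation_eq_zero_of_forall_eq fun i j => by
    cases t with
    | zero => rw [hx0, hx0]
    | succ t => rw [hsync t i ω ht, hsync t j ω ht]

end Iterates

end LocalSGD

theorem epoch_iterate_deviation_bound_general {d M H : ℕ} (hM : 0 < M)
    {Z : Type*} [MeasurableSpace Z] {Ω : Type*} [MeasurableSpace Ω]
    (P : Measure Ω) [IsProbabilityMeasure P]
    (D : Fin M → Measure Z) (hD : ∀ m, IsProbabilityMeasure (D m))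
    (L γ : ℝ) (hL : 0 < L) (μ : ℝ) (hμ : 0 ≤ μ)
    (hγ0 : 0 < γ)
    (F : EuclideanSpace ℝ (Fin d) → Z → ℝ) (dF : EuclideanSpace ℝ (Fin d) → Z → EuclideanSpace ℝ (Fin d))
    (f : EuclideanSpace ℝ (Fin d) → ℝ) (df : EuclideanSpace ℝ (Fin d) → EuclideanSpace ℝ (Fin d))
    (hsmooth : ∀ m, ∀ᵐ z ∂(D m), SmoothSC L μ (fun x => F x z) (fun x => dF x z))
    (hf : ∀ m x, f x = ∫ z, F x z ∂(D m))
    (hdf : ∀ m x, df x = ∫ z, dF x z ∂(D m))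
    (hdFjm : Measurable (fun p : EuclideanSpace ℝ (Fin d) × Z => dF p.1 p.2))
    (hFint : ∀ m x, Integrable (fun z => F x z) (D m))
    (hdFsq : ∀ m x, Integrable (fun z => ‖dF x z‖ ^ 2) (D m))
    (xstar : EuclideanSpace ℝ (Fin d))
    -- the i.i.d. samples `z t m ∼ D m`, independent over all `(t, m)`
    (z : ℕ → Fin M → Ω → Z) (hz : ∀ t m, Measurable (z t m))
    (hindep : iIndepFun (fun p : ℕ × Fin M => z p.1 p.2) P)
    (hlaw : ∀ t m, P.map (z t m) = D m)
    -- local iterates of Local SGD, with stochastic gradients `dF (x t m ω) (z t m ω)`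
    (x : ℕ → Fin M → Ω → EuclideanSpace ℝ (Fin d)) (x0 : EuclideanSpace ℝ (Fin d))
    (hx0 : ∀ m ω, x 0 m ω = x0)
    (hxmeas : ∀ t m, Measurable (x t m))
    -- synchronization times `s 0 = 0 < s 1 < s 2 < ⋯` with gaps at most `H`
    (s : ℕ → ℕ) (hsmono : StrictMono s)
    (hgap : ∀ p, s (p + 1) ≤ s p + H)
    -- Local SGD dynamics
    (hsync : ∀ t m ω, (∃ p, s p = t + 1) →
      x (t + 1) m ω = (M : ℝ)⁻¹ • ∑ j, (x t j ω - γ • dF (x t j ω) (z t j ω)))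
    (hlocal : ∀ t m ω, ¬(∃ p, s p = t + 1) →
      x (t + 1) m ω = x t m ω - γ • dF (x t m ω) (z t m ω))
    (sopt2 : ℝ)
    (hsopt2 : sopt2 = (M : ℝ)⁻¹ * ∑ m, ∫ w, ‖dF xstar w‖ ^ 2 ∂(D m))
    (hγ : γ ≤ 1 / (2 * L)) :
    ∀ p : ℕ,
      (∑ t ∈ Finset.Icc (s p) (s (p + 1) - 1), (1 - γ * μ) ^ (s (p + 1) - 1 - t) *
          ∫ ω, (M : ℝ)⁻¹ * ∑ m, ‖x t m ω - (M : ℝ)⁻¹ • ∑ j, x t j ω‖ ^ 2 ∂P) ≤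
        2 * γ * ((H : ℝ) - 1) / (1 - γ * μ) *
            ∑ t ∈ Finset.Icc (s p) (s (p + 1) - 1), (1 - γ * μ) ^ (s (p + 1) - 1 - t) *
              ∫ ω, Breg f df ((M : ℝ)⁻¹ • ∑ m, x t m ω) xstar ∂P +
          2 * γ ^ 2 * sopt2 * ((H : ℝ) - 1) *
            ∑ t ∈ Finset.Icc (s p) (s (p + 1) - 1), (1 - γ * μ) ^ (s (p + 1) - 1 - t) := by
  intro p
  subst hsopt2
  have hsync' : ∀ t m ω, t + 1 ∈ Set.range s →
      x (t + 1) m ω = LocalSGD.avg fun j => x t j ω - γ • dF (x t j ω) (z t j ω) := hsync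
  have hlocal' : ∀ t m ω, t + 1 ∉ Set.range s →
      x (t + 1) m ω = x t m ω - γ • dF (x t m ω) (z t m ω) := hlocal
  have hO : ∀ m, SmoothSCExpectation (D m) L μ F dF f df :=
    fun m => ⟨hsmooth m, hf m, hdf m, hdFjm, hFint m, hdFsq m⟩
  have hfs : SmoothSC L μ f df := (hO ⟨0, hM⟩).smoothSC
  have hγL : 2 * γ * L ≤ 1 := by rw [le_div_iff₀ (by positivity)] at hγ; linarith
  rcases subsingleton_or_nontrivial (EuclideanSpace ℝ (Fin d)) with hE | hE
  · simp [Subsingleton.elim _ (0 : EuclideanSpace ℝ (Fin d)), Breg]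
  have hsp : s p < s (p + 1) := hsmono (Nat.lt_succ_self p)
  refine sum_Icc_pow_mul_le (hfs.one_sub_mul_pos hγ0.le hγL) (by positivity) (by positivity)
    (by omega) (le_sub_iff_add_le.2 (by exact_mod_cast (by have := hgap p; omega)))
    (integral_eq_zero_of_ae <| ae_of_all _ <|
      LocalSGD.deviation_iterate_eq_zero hx0 hsync' ⟨p, rfl⟩)
    (fun t _ => integral_nonneg fun ω => hfs.breg_nonneg_s15 hμ _ _) fun t ht => ?_
  have hnosync : t + 1 ∉ Set.range s := by
    have := mem_Ico.1 ht
    exact hsmono.notMem_range_of_lt_of_lt (p := p) (by omega) (by omega)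
  simp only [hlocal' t _ _ hnosync]
  exact LocalSGD.integral_deviation_step_le hM hL hμ hγ0.le hγL hO (hxmeas t)
    (LocalSGD.memLp_iterate hL hμ hO hz hlaw hx0 hsync' hlocal' t) (hz t)
    (LocalSGD.indepFun_iterate hz hindep hdFjm hx0 hsync' hlocal' t) (hlaw t) xstar

/-- weighted epoch bound on the iterate deviation,
identical data, finite-sum setting. -/
theorem epoch_iterate_deviation_bound {d M H : ℕ} (hM : 0 < M) (hH : 1 ≤ H)
    {Z : Type*} [MeasurableSpace Z] {Ω : Type*} [MeasurableSpace Ω]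
    (P : Measure Ω) [IsProbabilityMeasure P]
    (D : Fin M → Measure Z) (hD : ∀ m, IsProbabilityMeasure (D m))
    (L γ : ℝ) (hL : 0 < L) (μ : ℝ) (hμ : 0 ≤ μ)
    (hγ0 : 0 < γ)
    (F : EuclideanSpace ℝ (Fin d) → Z → ℝ) (dF : EuclideanSpace ℝ (Fin d) → Z → EuclideanSpace ℝ (Fin d))
    (f : EuclideanSpace ℝ (Fin d) → ℝ) (df : EuclideanSpace ℝ (Fin d) → EuclideanSpace ℝ (Fin d))
    (hsmooth : ∀ m, ∀ᵐ z ∂(D m), SmoothSC L μ (fun x => F x z) (fun x => dF x z))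
    (hf : ∀ m x, f x = ∫ z, F x z ∂(D m))
    (hdf : ∀ m x, df x = ∫ z, dF x z ∂(D m))
    (hFjm : Measurable (fun p : EuclideanSpace ℝ (Fin d) × Z => F p.1 p.2))
    (hdFjm : Measurable (fun p : EuclideanSpace ℝ (Fin d) × Z => dF p.1 p.2))
    (hFint : ∀ m x, Integrable (fun z => F x z) (D m))
    (hdFsq : ∀ m x, Integrable (fun z => ‖dF x z‖ ^ 2) (D m))
    (xstar : EuclideanSpace ℝ (Fin d)) (hmin : ∀ y, f xstar ≤ f y)
    -- the i.i.d. samples `z t m ∼ D m`, independent over all `(t, m)`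
    (z : ℕ → Fin M → Ω → Z) (hz : ∀ t m, Measurable (z t m))
    (hindep : iIndepFun (fun p : ℕ × Fin M => z p.1 p.2) P)
    (hlaw : ∀ t m, P.map (z t m) = D m)
    -- local iterates of Local SGD, with stochastic gradients `dF (x t m ω) (z t m ω)`
    (x : ℕ → Fin M → Ω → EuclideanSpace ℝ (Fin d)) (x0 : EuclideanSpace ℝ (Fin d))
    (hx0 : ∀ m ω, x 0 m ω = x0)
    (hxmeas : ∀ t m, Measurable (x t m))
    -- synchronization times `s 0 = 0 < s 1 < s 2 < ⋯` with gaps at most `H`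
    (s : ℕ → ℕ) (hs0 : s 0 = 0) (hsmono : StrictMono s)
    (hgap : ∀ p, s (p + 1) ≤ s p + H)
    -- Local SGD dynamics
    (hsync : ∀ t m ω, (∃ p, s p = t + 1) →
      x (t + 1) m ω = (M : ℝ)⁻¹ • ∑ j, (x t j ω - γ • dF (x t j ω) (z t j ω)))
    (hlocal : ∀ t m ω, ¬(∃ p, s p = t + 1) →
      x (t + 1) m ω = x t m ω - γ • dF (x t m ω) (z t m ω))
    (sopt2 : ℝ)
    (hsopt2 : sopt2 = (M : ℝ)⁻¹ * ∑ m, ∫ w, ‖dF xstar w‖ ^ 2 ∂(D m))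
    (hγ : γ ≤ 1 / (2 * L)) :
    ∀ p : ℕ,
      (∑ t ∈ Finset.Icc (s p) (s (p + 1) - 1), (1 - γ * μ) ^ (s (p + 1) - 1 - t) *
          ∫ ω, (M : ℝ)⁻¹ * ∑ m, ‖x t m ω - (M : ℝ)⁻¹ • ∑ j, x t j ω‖ ^ 2 ∂P) ≤
        2 * γ * ((H : ℝ) - 1) / (1 - γ * μ) *
            ∑ t ∈ Finset.Icc (s p) (s (p + 1) - 1), (1 - γ * μ) ^ (s (p + 1) - 1 - t) *
              ∫ ω, Breg f df ((M : ℝ)⁻¹ • ∑ m, x t m ω) xstar ∂P +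
          2 * γ ^ 2 * sopt2 * ((H : ℝ) - 1) *
            ∑ t ∈ Finset.Icc (s p) (s (p + 1) - 1), (1 - γ * μ) ^ (s (p + 1) - 1 - t) :=
  epoch_iterate_deviation_bound_general hM P D hD L γ hL μ hμ hγ0 F dF f df hsmooth hf hdf hdFjm
    hFint hdFsq xstar z hz hindep hlaw x x0 hx0 hxmeas s hsmono hgap hsync hlocal sopt2 hsopt2 hγ
end
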